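/- arXiv:2309.12241 — 7 statements merged into one kernel-verified Lean document; each statement's English description precedes it below -/
import Mathlib

section
/- For every nonempty sofic shift S on ℤ² over a finite alphabet A, there exist a configuration x ∈ S and a constant c > 0 such that for every n ≥ 1 the number of distinct n×n square patterns occurring in x is at most 2^(c·n). -/
/-- A cell of the two-dimensional grid `ℤ²`. -/
abbrev Cell : Type := ℤ × ℤ

/-- A configuration over the alphabet `A` is a map `ℤ² → A`. -/
abbrev Config (A : Type) : Type := Cell → A

/-- The translateCfg of a configuration `x` by `u` is `i ↦ x (i + u)`. -/
def translateCfg {A : Type} (u : Cell) (x : Config A) : Config A := fun i => x (i + u)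

/-- The product topology on `A^(ℤ²)`, `A` being given the discrete topology. -/
def configTop (A : Type) : TopologicalSpace (Config A) :=
  @Pi.topologicalSpace Cell (fun _ => A) (fun _ => ⊥)

/-- A shift (space) over `A`: a set of configurations invariant under all translations
and closed in the product topology (`A` discrete). -/
def IsShiftSpace {A : Type} (S : Set (Config A)) : Prop :=
  (∀ (u : Cell) (x : Config A), x ∈ S → translateCfg u x ∈ S) ∧
    @IsClosed (Config A) (configTop A) S

/-- A finite pattern: a function `P : F → A` with `F ⊆ ℤ²` finite. -/
structure Pattern (A : Type) where
  supp : Finset Cell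
  val : supp → A

/-- `P` occurs in `x` if some translateCfg of `x` agrees with `P` on its support. -/
def Pattern.OccursIn {A : Type} (P : Pattern A) (x : Config A) : Prop :=
  ∃ u : Cell, ∀ i : P.supp, x ((i : Cell) + u) = P.val i

/-- The shift defined by a set `F` of forbidden finite patterns. -/
def shiftOf {A : Type} (F : Set (Pattern A)) : Set (Config A) :=
  { x | ∀ P ∈ F, ¬ P.OccursIn x }

/-- A shift of finite type: a shift definable by a finite set of forbidden finite patterns. -/
def IsSFT {A : Type} (S : Set (Config A)) : Prop :=
  ∃ F : Set (Pattern A), F.Finite ∧ S = shiftOf F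

/-- A sofic shift: a coordinatewise projection of a shift of finite type
over some finite alphabet. -/
def IsSofic {A : Type} (S : Set (Config A)) : Prop :=
  ∃ (A' : Type) (_ : Fintype A') (S' : Set (Config A')) (π : A' → A),
    IsSFT S' ∧ S = (fun y => π ∘ y) '' S'

/-- The cell of `ℤ²` corresponding to an index in the `n × n` square `{0,…,n−1}²`. -/
def toCell {n : ℕ} (q : Fin n × Fin n) : Cell := ((q.1 : ℤ), (q.2 : ℤ))

/-- An `n × n` square pattern, i.e. a pattern with support `B_n = {0,…,n−1}²`. -/
abbrev SqPattern (A : Type) (n : ℕ) : Type := Fin n × Fin n → A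

/-- An `n × n` square pattern occurs in `x` if some translateCfg of `x` agrees with it. -/
def SqOccursIn {A : Type} {n : ℕ} (P : SqPattern A n) (x : Config A) : Prop :=
  ∃ u : Cell, ∀ q : Fin n × Fin n, x (toCell q + u) = P q

/-- A pattern is globally admissible for `S` if it occurs in some configuration of `S`. -/
def SqGloballyAdmissible {A : Type} {n : ℕ} (S : Set (Config A)) (P : SqPattern A n) : Prop :=
  ∃ x ∈ S, SqOccursIn P x

/-- Membership in the square `B_n = {0,…,n−1}² ⊆ ℤ²`. -/
def inBn (n : ℕ) (p : Cell) : Prop :=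
  0 ≤ p.1 ∧ p.1 < (n : ℤ) ∧ 0 ≤ p.2 ∧ p.2 < (n : ℤ)

instance (n : ℕ) (p : Cell) : Decidable (inBn n p) := by unfold inBn; infer_instance

/-- A pattern on `F_n = ℤ² \ B_n`, the complement of the `n × n` square. -/
abbrev ExtPattern (A : Type) (n : ℕ) : Type := { p : Cell // ¬ inBn n p } → A

/-- The configuration `P ∪ Q`, equal to `P` on `B_n` and to `Q` on `F_n`. -/
def glue {A : Type} {n : ℕ} (P : SqPattern A n) (Q : ExtPattern A n) : Config A :=
  fun p =>
    if h : inBn n p then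
      P (⟨p.1.toNat, by unfold inBn at h; omega⟩, ⟨p.2.toNat, by unfold inBn at h; omega⟩)
    else Q ⟨p, h⟩

/-- The extension set `Ext_S(P) = {Q : F_n → A | P ∪ Q ∈ S}`. -/
def ExtSet {A : Type} {n : ℕ} (S : Set (Config A)) (P : SqPattern A n) :
    Set (ExtPattern A n) :=
  { Q | glue P Q ∈ S }

/-- A finite sequence of sets is an increasing-union chain if no set is contained in
the union of the preceding ones. -/
def IncreasingUnionChain {β : Type} {m : ℕ} (T : Fin m → Set β) : Prop :=
  ∀ i : Fin m, ¬ T i ⊆ ⋃ (j : Fin m) (_ : j < i), T j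

namespace SoficAux

variable {B : Type}

/-- Equality of two configurations on the square `B_m`. -/
def EqB (m : ℕ) (g h : Config B) : Prop := ∀ p : Cell, inBn m p → g p = h p

/-- Frame (boundary ring of width `k`) cells of the square `B_m`. -/
def frCell (k m : ℕ) (p : Cell) : Prop :=
  inBn m p ∧ (p.1 < (k : ℤ) ∨ (m : ℤ) ≤ p.1 + k ∨ p.2 < (k : ℤ) ∨ (m : ℤ) ≤ p.2 + k)

instance (k m : ℕ) (p : Cell) : Decidable (frCell k m p) := by
  unfold frCell inBn; infer_instance

/-- Restriction of a configuration to the frame, with default elsewhere. -/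
def fR (d₀ : B) (k m : ℕ) (g : Config B) : Config B :=
  fun p => if frCell k m p then g p else d₀

/-- No forbidden pattern of `F` occurs with all its cells inside `B_m`. -/
def GoodIn (F : Set (Pattern B)) (m : ℕ) (g : Config B) : Prop :=
  ∀ P ∈ F, ∀ w : Cell,
    ¬((∀ i : P.supp, inBn m ((i : Cell) + w)) ∧ (∀ i : P.supp, g ((i : Cell) + w) = P.val i))

/-- Choice of a configuration satisfying `Φ` with prescribed frame data. -/
noncomputable def canFrom (d₀ : B) (Φ : Config B → Prop) (k m : ℕ) (r : Config B) : Config B :=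
  @Classical.epsilon (Config B) ⟨fun _ => d₀⟩ (fun g => Φ g ∧ fR d₀ k m g = r)

/-- Size of a level-`j` block. -/
def nsz (k j : ℕ) : ℕ := k * 2 ^ j

/-- Quadrant offsets inside a level-`(j+1)` block. -/
def qofs (k j : ℕ) (d : Fin 2 × Fin 2) : Cell :=
  ((d.1 : ℤ) * (nsz k j : ℤ), (d.2 : ℤ) * (nsz k j : ℤ))

/-- Hereditarily canonical blocks. -/
def HC (d₀ : B) (F : Set (Pattern B)) (k : ℕ) : ℕ → Config B → Prop
  | 0, g => GoodIn F (nsz k 0) g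
  | (j+1), g => GoodIn F (nsz k (j+1)) g ∧ ∀ d : Fin 2 × Fin 2,
      HC d₀ F k j (translateCfg (qofs k j d) g) ∧
      EqB (nsz k j) (translateCfg (qofs k j d) g)
        (canFrom d₀ (HC d₀ F k j) k (nsz k j)
          (fR d₀ k (nsz k j) (translateCfg (qofs k j d) g)))

/-- The canonical block with given frame data, at level `j`. -/
noncomputable def canLv (d₀ : B) (F : Set (Pattern B)) (k j : ℕ) : Config B → Config B :=
  canFrom d₀ (HC d₀ F k j) k (nsz k j)

/-- A block is canonical at level `j`. -/
def CanonAt (d₀ : B) (F : Set (Pattern B)) (k j : ℕ) (g : Config B) : Prop :=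
  EqB (nsz k j) g (canLv d₀ F k j (fR d₀ k (nsz k j) g))

/-- Base corner of the aligned `m`-block containing `p`. -/
def ibase (m : ℕ) (p : Cell) : Cell :=
  ((m : ℤ) * (p.1 / (m:ℤ)), (m : ℤ) * (p.2 / (m:ℤ)))

/-- Alignment to the `m`-grid. -/
def Algn (m : ℕ) (a : Cell) : Prop := ((m : ℤ) ∣ a.1) ∧ ((m : ℤ) ∣ a.2)

/-- Canonicalization at level `j`. -/
noncomputable def stepC (d₀ : B) (F : Set (Pattern B)) (k j : ℕ) (x : Config B) : Config B :=
  fun p => canLv d₀ F k j (fR d₀ k (nsz k j) (translateCfg (ibase (nsz k j) p) x))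
    (p - ibase (nsz k j) p)

/-- The sequence of successively canonicalized configurations. -/
noncomputable def seqC (d₀ : B) (F : Set (Pattern B)) (k : ℕ) (x₀ : Config B) : ℕ → Config B
  | 0 => x₀
  | (j+1) => stepC d₀ F k (j+1) (seqC d₀ F k x₀ j)

end SoficAux
namespace SoficAux

variable {B : Type}

lemma tr_tr (a b : Cell) (x : Config B) :
    translateCfg b (translateCfg a x) = translateCfg (b + a) x := by
  funext p; simp [translateCfg, add_assoc]

lemma tr_zero (x : Config B) : translateCfg (0 : Cell) x = x := by
  funext p; simp [translateCfg]

lemma EqB.symm {m : ℕ} {g h : Config B} (e : EqB m g h) : EqB m h g :=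
  fun p hp => (e p hp).symm

lemma frCell_inBn {k m : ℕ} {p : Cell} (h : frCell k m p) : inBn m p := h.1

lemma fR_congr {d₀ : B} {k m : ℕ} {g h : Config B} (e : EqB m g h) :
    fR d₀ k m g = fR d₀ k m h := by
  funext p
  by_cases hp : frCell k m p
  · simp [fR, hp, e p hp.1]
  · simp [fR, hp]

lemma GoodIn_congr {F : Set (Pattern B)} {m : ℕ} {g h : Config B} (e : EqB m g h)
    (hg : GoodIn F m g) : GoodIn F m h := by
  intro P hP w hocc
  exact hg P hP w ⟨hocc.1, fun i => by rw [e _ (hocc.1 i)]; exact hocc.2 i⟩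

lemma inBn_mono {m m' : ℕ} (h : m ≤ m') {p : Cell} (hp : inBn m p) : inBn m' p := by
  unfold inBn at *
  have : (m : ℤ) ≤ (m' : ℤ) := by exact_mod_cast h
  omega

lemma nsz_pos {k : ℕ} (hk : 1 ≤ k) (j : ℕ) : 0 < nsz k j :=
  Nat.mul_pos hk (Nat.pow_pos (by norm_num))

lemma nsz_succ (k j : ℕ) : nsz k (j+1) = 2 * nsz k j := by
  simp [nsz, pow_succ]; ring

lemma EqB_sub {k : ℕ} {j : ℕ} {g h : Config B} (e : EqB (nsz k (j+1)) g h)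
    (d : Fin 2 × Fin 2) :
    EqB (nsz k j) (translateCfg (qofs k j d) g) (translateCfg (qofs k j d) h) := by
  intro p hp
  apply e
  have h2 := nsz_succ k j
  obtain ⟨h1, h2', h3, h4⟩ := hp
  have hd1 : (d.1 : ℤ) ≤ 1 := by exact_mod_cast Fin.is_le d.1
  have hd2 : (d.2 : ℤ) ≤ 1 := by exact_mod_cast Fin.is_le d.2
  have hd1' : (0:ℤ) ≤ (d.1 : ℤ) := by positivity
  have hd2' : (0:ℤ) ≤ (d.2 : ℤ) := by positivity
  have hnn : (0:ℤ) ≤ (nsz k j : ℤ) := by positivity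
  constructor
  · simp only [translateCfg, qofs] at *
    simp only [Prod.fst_add]
    nlinarith
  refine ⟨?_, ?_, ?_⟩
  · simp only [qofs, Prod.fst_add]
    have : ((nsz k (j+1) : ℕ) : ℤ) = 2 * (nsz k j : ℤ) := by exact_mod_cast h2
    rw [this]
    nlinarith
  · simp only [qofs, Prod.snd_add]
    nlinarith
  · simp only [qofs, Prod.snd_add]
    have : ((nsz k (j+1) : ℕ) : ℤ) = 2 * (nsz k j : ℤ) := by exact_mod_cast h2
    rw [this]
    nlinarith

lemma HC_congr {d₀ : B} {F : Set (Pattern B)} {k : ℕ} :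
    ∀ (j : ℕ) {g h : Config B}, EqB (nsz k j) g h → HC d₀ F k j g → HC d₀ F k j h := by
  intro j
  induction j with
  | zero => intro g h e hg; exact GoodIn_congr e hg
  | succ j ih =>
    intro g h e hg
    refine ⟨GoodIn_congr e hg.1, fun d => ?_⟩
    obtain ⟨hHC, hEq⟩ := hg.2 d
    have esub := EqB_sub e d
    refine ⟨ih esub hHC, ?_⟩
    have hfr : fR d₀ k (nsz k j) (translateCfg (qofs k j d) g)
        = fR d₀ k (nsz k j) (translateCfg (qofs k j d) h) := fR_congr esub
    intro p hp
    rw [← esub p hp, ← hfr]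
    exact hEq p hp

lemma canLv_spec {d₀ : B} {F : Set (Pattern B)} {k j : ℕ} {g : Config B}
    (hg : HC d₀ F k j g) :
    HC d₀ F k j (canLv d₀ F k j (fR d₀ k (nsz k j) g)) ∧
      fR d₀ k (nsz k j) (canLv d₀ F k j (fR d₀ k (nsz k j) g)) = fR d₀ k (nsz k j) g := by
  have := Classical.epsilon_spec
    (p := fun g' => HC d₀ F k j g' ∧ fR d₀ k (nsz k j) g' = fR d₀ k (nsz k j) g)
    ⟨g, hg, rfl⟩
  exact this

lemma CanonAt_congr {d₀ : B} {F : Set (Pattern B)} {k j : ℕ} {g h : Config B}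
    (e : EqB (nsz k j) g h) (hg : CanonAt d₀ F k j g) : CanonAt d₀ F k j h := by
  intro p hp
  rw [← fR_congr e, ← e p hp]
  exact hg p hp

end SoficAux
namespace SoficAux

variable {B : Type}

lemma ediv_block {m : ℕ} (hm : 0 < m) {e s : ℤ} (h0 : 0 ≤ s) (h1 : s < m) :
    ((m : ℤ) * e + s) / (m : ℤ) = e := by
  have hm' : (m : ℤ) ≠ 0 := by positivity
  rw [add_comm, Int.add_mul_ediv_left _ _ hm', Int.ediv_eq_zero_of_lt h0 h1, zero_add]

lemma ibase_algn (m : ℕ) (p : Cell) : Algn m (ibase m p) :=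
  ⟨⟨_, rfl⟩, ⟨_, rfl⟩⟩

lemma ibase_add {m : ℕ} (hm : 0 < m) {a : Cell} (ha : Algn m a) {q : Cell}
    (hq : inBn m q) : ibase m (q + a) = a := by
  obtain ⟨⟨z1, hz1⟩, ⟨z2, hz2⟩⟩ := ha
  obtain ⟨h1, h2, h3, h4⟩ := hq
  have e1 : (q.1 + a.1) / (m:ℤ) = z1 := by
    rw [hz1]; rw [add_comm]; exact ediv_block hm h1 h2
  have e2 : (q.2 + a.2) / (m:ℤ) = z2 := by
    rw [hz2]; rw [add_comm]; exact ediv_block hm h3 h4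
  have e1' : (q + a).1 / (m:ℤ) = z1 := by show (q.1 + a.1) / (m:ℤ) = z1; exact e1
  have e2' : (q + a).2 / (m:ℤ) = z2 := by show (q.2 + a.2) / (m:ℤ) = z2; exact e2
  simp only [ibase, e1', e2', Prod.ext_iff]
  exact ⟨hz1.symm, hz2.symm⟩

lemma sub_ibase_inBn {m : ℕ} (hm : 0 < m) (p : Cell) : inBn m (p - ibase m p) := by
  have hm' : (0:ℤ) < (m:ℤ) := by exact_mod_cast hm
  have h1 := Int.emod_nonneg p.1 (ne_of_gt hm')
  have h2 := Int.emod_lt_of_pos p.1 hm'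
  have h3 := Int.emod_nonneg p.2 (ne_of_gt hm')
  have h4 := Int.emod_lt_of_pos p.2 hm'
  have e1 : p.1 - (m:ℤ) * (p.1 / (m:ℤ)) = p.1 % m := by rw [Int.emod_def]
  have e2 : p.2 - (m:ℤ) * (p.2 / (m:ℤ)) = p.2 % m := by rw [Int.emod_def]
  exact ⟨by simp [ibase]; omega, by simp [ibase]; omega, by simp [ibase]; omega,
    by simp [ibase]; omega⟩

/-- 1D grid lemma: if a window of length `k` crosses a block boundary, then every cell of
the window lies in the width-`k` frame of its own block. -/
lemma grid1D {k m : ℕ} (hk : 1 ≤ k) (hkm : k ≤ m) {t c : ℤ}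
    (h1 : t ≤ c) (h2 : c ≤ t + (k - 1 : ℤ))
    (hne : t / (m:ℤ) ≠ (t + (k - 1 : ℤ)) / (m:ℤ)) :
    c - (m : ℤ) * (c / (m:ℤ)) < k ∨ (m : ℤ) ≤ (c - (m : ℤ) * (c / (m:ℤ))) + k := by
  by_contra hcon
  push_neg at hcon
  obtain ⟨hA, hB⟩ := hcon
  set e := c / (m:ℤ) with he
  set r := c - (m : ℤ) * e with hr
  have hm : (0:ℤ) < m := by exact_mod_cast lt_of_lt_of_le hk hkm
  have hr0 : 0 ≤ r := by
    have := Int.emod_nonneg c (ne_of_gt hm)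
    rw [Int.emod_def] at this; omega
  have hrm : r < m := by
    have := Int.emod_lt_of_pos c hm
    rw [Int.emod_def] at this; omega
  have hk' : (1:ℤ) ≤ k := by exact_mod_cast hk
  have ht : t / (m:ℤ) = e := by
    have h' : t = (m:ℤ) * e + (r - (c - t)) := by rw [hr]; ring
    rw [h']
    exact ediv_block (by exact_mod_cast hm) (by omega) (by omega)
  have ht' : (t + (k-1:ℤ)) / (m:ℤ) = e := by
    have h' : t + (k-1:ℤ) = (m:ℤ) * e + (r - (c - t) + (k-1)) := by rw [hr]; ring
    rw [h']
    exact ediv_block (by exact_mod_cast hm) (by omega) (by omega)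
  exact hne (ht.trans ht'.symm)

lemma ediv_mono {m : ℕ} (hm : 0 < m) {a b : ℤ} (h : a ≤ b) :
    a / (m:ℤ) ≤ b / (m:ℤ) :=
  Int.ediv_le_ediv (by exact_mod_cast hm) h

end SoficAux
namespace SoficAux

variable {B : Type}

lemma good_of_shift {F : Set (Pattern B)} {x : Config B} (hx : x ∈ shiftOf F)
    (m : ℕ) (a : Cell) : GoodIn F m (translateCfg a x) := by
  intro P hP w hocc
  exact hx P hP ⟨w + a, fun i => by
    have := hocc.2 i
    simpa [translateCfg, add_assoc] using this⟩

lemma coord_block_eq {m : ℕ} (hm : 0 < m) {t c d : ℤ} (h1 : t ≤ c) (h2 : c ≤ t + d)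
    (heq : t / (m:ℤ) = (t + d) / (m:ℤ)) : c / (m:ℤ) = t / (m:ℤ) := by
  have ha := ediv_mono hm h1
  have hb := ediv_mono hm h2
  omega

lemma rem_bounds {m : ℕ} (hm : 0 < m) (c : ℤ) :
    0 ≤ c - (m:ℤ) * (c / (m:ℤ)) ∧ c - (m:ℤ) * (c / (m:ℤ)) < m := by
  have hm' : (0:ℤ) < (m:ℤ) := by exact_mod_cast hm
  have h1 := Int.emod_nonneg c (ne_of_gt hm')
  have h2 := Int.emod_lt_of_pos c hm'
  rw [Int.emod_def] at h1 h2
  exact ⟨h1, h2⟩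

/-- The simultaneous aligned same-frame replacement lemma. -/
lemma swap_mem {F : Set (Pattern B)} {k m : ℕ} (hk : 1 ≤ k) (hkm : k ≤ m)
    (hwin : ∀ P ∈ F, ∃ v : Cell, ∀ i ∈ P.supp, inBn k ((i : Cell) - v))
    {x y : Config B} (hx : x ∈ shiftOf F)
    (H1 : ∀ a : Cell, Algn m a → GoodIn F m (translateCfg a y))
    (H2 : ∀ a : Cell, Algn m a → ∀ p : Cell, frCell k m p →
      translateCfg a y p = translateCfg a x p) :
    y ∈ shiftOf F := by
  have hm : 0 < m := lt_of_lt_of_le hk hkm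
  intro P hP hocc
  obtain ⟨u, hu⟩ := hocc
  obtain ⟨v, hv⟩ := hwin P hP
  by_cases hA : ((u.1 + v.1) / (m:ℤ) = (u.1 + v.1 + ((k:ℤ) - 1)) / (m:ℤ)) ∧
      ((u.2 + v.2) / (m:ℤ) = (u.2 + v.2 + ((k:ℤ) - 1)) / (m:ℤ))
  · -- the window lies in a single aligned block: contradict GoodIn
    set a : Cell := ibase m (u + v) with hadef
    have ha1 : a.1 = (m:ℤ) * ((u.1 + v.1) / (m:ℤ)) := rfl
    have ha2 : a.2 = (m:ℤ) * ((u.2 + v.2) / (m:ℤ)) := rfl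
    refine H1 a (ibase_algn m (u + v)) P hP (u - a) ⟨?_, ?_⟩
    · intro i
      have hiv := hv i i.2
      have hb1 : 0 ≤ (i:Cell).1 - v.1 ∧ (i:Cell).1 - v.1 < k := by
        obtain ⟨x1, x2, _, _⟩ := hiv
        exact ⟨by simpa using x1, by simpa using x2⟩
      have hb2 : 0 ≤ (i:Cell).2 - v.2 ∧ (i:Cell).2 - v.2 < k := by
        obtain ⟨_, _, x3, x4⟩ := hiv
        exact ⟨by simpa using x3, by simpa using x4⟩
      have e1 : ((i:Cell).1 + u.1) / (m:ℤ) = (u.1 + v.1) / (m:ℤ) :=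
        coord_block_eq hm (by omega) (by omega) hA.1
      have e2 : ((i:Cell).2 + u.2) / (m:ℤ) = (u.2 + v.2) / (m:ℤ) :=
        coord_block_eq hm (by omega) (by omega) hA.2
      have r1 := rem_bounds hm ((i:Cell).1 + u.1)
      have r2 := rem_bounds hm ((i:Cell).2 + u.2)
      have g1 : ((i : Cell) + (u - a)).1 = (i:Cell).1 + u.1 - a.1 := by
        simp [Prod.fst_add, Prod.fst_sub]; ring
      have g2 : ((i : Cell) + (u - a)).2 = (i:Cell).2 + u.2 - a.2 := by
        simp [Prod.snd_add, Prod.snd_sub]; ring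
      have e1' : (m:ℤ) * (((i:Cell).1 + u.1) / (m:ℤ)) = (m:ℤ) * ((u.1 + v.1) / (m:ℤ)) := by
        rw [e1]
      have e2' : (m:ℤ) * (((i:Cell).2 + u.2) / (m:ℤ)) = (m:ℤ) * ((u.2 + v.2) / (m:ℤ)) := by
        rw [e2]
      refine ⟨?_, ?_, ?_, ?_⟩
      · rw [g1, ha1]; omega
      · rw [g1, ha1]; omega
      · rw [g2, ha2]; omega
      · rw [g2, ha2]; omega
    · intro i
      have : ((i : Cell) + (u - a)) + a = (i : Cell) + u := by abel
      simp only [translateCfg, this]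
      exact hu i
  · -- the window crosses a grid line: y agrees with x on it
    have hyx : ∀ i : P.supp, y ((i : Cell) + u) = x ((i : Cell) + u) := by
      intro i
      have hiv := hv i i.2
      have hb1 : 0 ≤ (i:Cell).1 - v.1 ∧ (i:Cell).1 - v.1 < k := by
        obtain ⟨x1, x2, _, _⟩ := hiv
        exact ⟨by simpa using x1, by simpa using x2⟩
      have hb2 : 0 ≤ (i:Cell).2 - v.2 ∧ (i:Cell).2 - v.2 < k := by
        obtain ⟨_, _, x3, x4⟩ := hiv
        exact ⟨by simpa using x3, by simpa using x4⟩
      set c : Cell := (i : Cell) + u with hcdef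
      have hc1 : c.1 = (i:Cell).1 + u.1 := rfl
      have hc2 : c.2 = (i:Cell).2 + u.2 := rfl
      set a : Cell := ibase m c with hadef
      have ga1 : (c - a).1 = c.1 - (m:ℤ) * (c.1 / (m:ℤ)) := by
        simp [hadef, ibase]
      have ga2 : (c - a).2 = c.2 - (m:ℤ) * (c.2 / (m:ℤ)) := by
        simp [hadef, ibase]
      have hfr : frCell k m (c - a) := by
        refine ⟨sub_ibase_inBn hm c, ?_⟩
        rcases not_and_or.1 hA with h | h
        · have := grid1D hk hkm (t := u.1 + v.1) (c := c.1) (by omega) (by omega) h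
          rw [ga1]; tauto
        · have := grid1D hk hkm (t := u.2 + v.2) (c := c.2) (by omega) (by omega) h
          rw [ga2]
          right; right
          tauto
      have := H2 a (ibase_algn m c) (c - a) hfr
      simpa [translateCfg, sub_add_cancel] using this
    exact hx P hP ⟨u, fun i => by rw [← hyx i]; exact hu i⟩

end SoficAux
namespace SoficAux

variable {B : Type}

/-- `b + B_{mi} ⊆ B_m`. -/
def InBlk (mi m : ℕ) (b : Cell) : Prop :=
  0 ≤ b.1 ∧ b.1 + (mi : ℤ) ≤ m ∧ 0 ≤ b.2 ∧ b.2 + (mi : ℤ) ≤ m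

lemma nsz_dvd {k i j : ℕ} (h : i ≤ j) : ((nsz k i : ℕ) : ℤ) ∣ ((nsz k j : ℕ) : ℤ) := by
  have : nsz k i ∣ nsz k j := mul_dvd_mul_left k (pow_dvd_pow 2 h)
  exact_mod_cast this

lemma dvd_add_le {mi c M : ℤ} (h0 : 0 < mi) (h1 : mi ∣ c) (h2 : c < M) (h3 : mi ∣ M) :
    c + mi ≤ M := by
  have : mi ∣ M - c := Dvd.dvd.sub h3 h1
  have := Int.le_of_dvd (by omega) this
  omega

lemma EqB_tr_sub {mi m : ℕ} {g h : Config B} (e : EqB m g h) {b : Cell}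
    (hb : InBlk mi m b) : EqB mi (translateCfg b g) (translateCfg b h) := by
  intro p hp
  apply e
  obtain ⟨h1, h2, h3, h4⟩ := hp
  obtain ⟨g1, g2, g3, g4⟩ := hb
  have e1 : (p + b).1 = p.1 + b.1 := rfl
  have e2 : (p + b).2 = p.2 + b.2 := rfl
  exact ⟨by omega, by omega, by omega, by omega⟩

lemma HC_succ_iff {d₀ : B} {F : Set (Pattern B)} {k j : ℕ} {g : Config B} :
    HC d₀ F k (j+1) g ↔ GoodIn F (nsz k (j+1)) g ∧ ∀ d : Fin 2 × Fin 2,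
      HC d₀ F k j (translateCfg (qofs k j d) g) ∧
        CanonAt d₀ F k j (translateCfg (qofs k j d) g) := Iff.rfl

lemma HC_good {d₀ : B} {F : Set (Pattern B)} {k : ℕ} :
    ∀ {j : ℕ} {g : Config B}, HC d₀ F k j g → GoodIn F (nsz k j) g := by
  intro j g
  match j with
  | 0 => exact fun h => h
  | (j+1) => exact fun h => h.1

/-- frame of the canonical block equals frame of the original, plus it is HC. -/
lemma canLv_spec' {d₀ : B} {F : Set (Pattern B)} {k j : ℕ} {g : Config B}
    (hg : HC d₀ F k j g) :
    HC d₀ F k j (canLv d₀ F k j (fR d₀ k (nsz k j) g)) ∧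
      fR d₀ k (nsz k j) (canLv d₀ F k j (fR d₀ k (nsz k j) g)) = fR d₀ k (nsz k j) g :=
  canLv_spec hg

lemma canLv_frame_eq {d₀ : B} {F : Set (Pattern B)} {k j : ℕ} {g : Config B}
    (hg : HC d₀ F k j g) {p : Cell} (hp : frCell k (nsz k j) p) :
    canLv d₀ F k j (fR d₀ k (nsz k j) g) p = g p := by
  have h := (canLv_spec' hg).2
  have := congrFun h p
  simpa [fR, hp] using this

/-- At level 0 every good block is canonical. -/
lemma canon0 {d₀ : B} {F : Set (Pattern B)} {k : ℕ} (hk : 1 ≤ k) {g : Config B}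
    (hg : HC d₀ F k 0 g) : CanonAt d₀ F k 0 g := by
  intro p hp
  have hfr : frCell k (nsz k 0) p := by
    refine ⟨hp, Or.inl ?_⟩
    have : nsz k 0 = k := by simp [nsz]
    rw [this] at hp
    exact hp.2.1
  exact (canLv_frame_eq hg hfr).symm

lemma canonAt_canLv {d₀ : B} {F : Set (Pattern B)} {k j : ℕ} {g : Config B}
    (hg : HC d₀ F k j g) :
    CanonAt d₀ F k j (canLv d₀ F k j (fR d₀ k (nsz k j) g)) := by
  intro p hp
  rw [(canLv_spec' hg).2]

/-- Descent: strictly lower-level aligned sub-blocks of an HC block are HC and canonical. -/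
lemma descent {d₀ : B} {F : Set (Pattern B)} {k : ℕ} (hk : 1 ≤ k) :
    ∀ (j : ℕ) (g : Config B), HC d₀ F k j g → ∀ i, i < j → ∀ b : Cell,
      Algn (nsz k i) b → InBlk (nsz k i) (nsz k j) b →
      HC d₀ F k i (translateCfg b g) ∧ CanonAt d₀ F k i (translateCfg b g) := by
  intro j
  induction j with
  | zero => intro g _ i hi; omega
  | succ j ih =>
    intro g hg i hi b hal hin
    have hni : 0 < nsz k i := nsz_pos hk i
    have hnj : 0 < nsz k j := nsz_pos hk j
    have hdvd : ((nsz k i : ℕ) : ℤ) ∣ ((nsz k j : ℕ) : ℤ) := nsz_dvd (by omega)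
    have h2 : (nsz k (j+1) : ℤ) = 2 * (nsz k j : ℤ) := by
      have := nsz_succ k j; push_cast [this]; ring
    -- choose the quadrant
    have key : ∀ c : ℤ, ((nsz k i : ℕ) : ℤ) ∣ c → 0 ≤ c → c + nsz k i ≤ nsz k (j+1) →
        (0 ≤ c ∧ c + nsz k i ≤ nsz k j) ∨
        (0 ≤ c - nsz k j ∧ (c - nsz k j) + nsz k i ≤ nsz k j) := by
      intro c hdc h0 h1
      by_cases hc : c + nsz k i ≤ nsz k j
      · exact Or.inl ⟨h0, hc⟩
      · right
        have hcj : (nsz k j : ℤ) ≤ c := by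
          by_contra hlt
          push_neg at hlt
          have := dvd_add_le (by exact_mod_cast hni) hdc hlt hdvd
          omega
        omega
    obtain ⟨⟨z1, hz1⟩, ⟨z2, hz2⟩⟩ := hal
    obtain ⟨g1, g2, g3, g4⟩ := hin
    have k1 := key b.1 ⟨z1, hz1⟩ g1 g2
    have k2 := key b.2 ⟨z2, hz2⟩ g3 g4
    -- quadrant d and reduced offset b'
    set d : Fin 2 × Fin 2 := (if b.1 + nsz k i ≤ nsz k j then 0 else 1,
      if b.2 + nsz k i ≤ nsz k j then 0 else 1) with hd
    set b' : Cell := b - qofs k j d with hb'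
    have hq1 : (qofs k j d).1 = if b.1 + nsz k i ≤ nsz k j then 0 else (nsz k j : ℤ) := by
      by_cases h : b.1 + nsz k i ≤ nsz k j <;> simp [qofs, hd, h]
    have hq2 : (qofs k j d).2 = if b.2 + nsz k i ≤ nsz k j then 0 else (nsz k j : ℤ) := by
      by_cases h : b.2 + nsz k i ≤ nsz k j <;> simp [qofs, hd, h]
    have hb'1 : b'.1 = b.1 - (qofs k j d).1 := rfl
    have hb'2 : b'.2 = b.2 - (qofs k j d).2 := rfl
    have hin' : InBlk (nsz k i) (nsz k j) b' := by
      refine ⟨?_, ?_, ?_, ?_⟩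
      · rw [hb'1, hq1]; rcases k1 with ⟨a1, a2⟩ | ⟨a1, a2⟩ <;> split <;> omega
      · rw [hb'1, hq1]; rcases k1 with ⟨a1, a2⟩ | ⟨a1, a2⟩ <;> split <;> omega
      · rw [hb'2, hq2]; rcases k2 with ⟨a1, a2⟩ | ⟨a1, a2⟩ <;> split <;> omega
      · rw [hb'2, hq2]; rcases k2 with ⟨a1, a2⟩ | ⟨a1, a2⟩ <;> split <;> omega
    have hal' : Algn (nsz k i) b' := by
      constructor
      · rw [hb'1, hq1]
        split
        · exact ⟨z1, by omega⟩
        · obtain ⟨w, hw⟩ := hdvd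
          exact ⟨z1 - w, by rw [hz1, hw]; ring⟩
      · rw [hb'2, hq2]
        split
        · exact ⟨z2, by omega⟩
        · obtain ⟨w, hw⟩ := hdvd
          exact ⟨z2 - w, by rw [hz2, hw]; ring⟩
    have hsum : b' + qofs k j d = b := by
      rw [hb']; abel
    have htr : translateCfg b g = translateCfg b' (translateCfg (qofs k j d) g) := by
      rw [tr_tr, hsum]
    obtain ⟨hHCsub, hCansub⟩ := (HC_succ_iff.1 hg).2 d
    rcases Nat.lt_succ_iff_lt_or_eq.1 hi with hii | hii
    · rw [htr]
      exact ih (translateCfg (qofs k j d) g) hHCsub i hii b' hal' hin'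
    · subst hii
      have hb0 : b' = 0 := by
        obtain ⟨c1, c2, c3, c4⟩ := hin'
        have : b'.1 = 0 ∧ b'.2 = 0 := by omega
        exact Prod.ext this.1 this.2
      rw [htr, hb0, tr_zero]
      exact ⟨hHCsub, hCansub⟩

end SoficAux
namespace SoficAux

variable {B : Type}

/-- The invariant satisfied by the canonicalization sequence. -/
def Inv (d₀ : B) (F : Set (Pattern B)) (k : ℕ) (x : Config B) (j : ℕ) : Prop :=
  x ∈ shiftOf F ∧ ∀ i ≤ j, ∀ a : Cell, Algn (nsz k i) a →
    HC d₀ F k i (translateCfg a x) ∧ CanonAt d₀ F k i (translateCfg a x)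

lemma inv_zero {d₀ : B} {F : Set (Pattern B)} {k : ℕ} (hk : 1 ≤ k) {x : Config B}
    (hx : x ∈ shiftOf F) : Inv d₀ F k x 0 := by
  refine ⟨hx, fun i hi a _ => ?_⟩
  interval_cases i
  have hg : HC d₀ F k 0 (translateCfg a x) := good_of_shift hx (nsz k 0) a
  exact ⟨hg, canon0 hk hg⟩

lemma inv_step {d₀ : B} {F : Set (Pattern B)} {k : ℕ} (hk : 1 ≤ k)
    (hwin : ∀ P ∈ F, ∃ v : Cell, ∀ i ∈ P.supp, inBn k ((i : Cell) - v))
    {x : Config B} {j : ℕ} (hx : Inv d₀ F k x j) :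
    Inv d₀ F k (stepC d₀ F k (j+1) x) (j+1) := by
  set m := nsz k (j+1) with hm
  have hm0 : 0 < m := nsz_pos hk (j+1)
  have hkm : k ≤ m := by
    have : k * 1 ≤ k * 2 ^ (j+1) := Nat.mul_le_mul_left k (Nat.one_le_two_pow)
    simpa [hm, nsz] using this
  set y := stepC d₀ F k (j+1) x with hy
  -- Key 1: each aligned m-block of y is the canonical block of the old one
  have key1 : ∀ a : Cell, Algn m a →
      EqB m (translateCfg a y) (canLv d₀ F k (j+1) (fR d₀ k m (translateCfg a x))) := by
    intro a ha p hp
    have hbase : ibase m (p + a) = a := ibase_add hm0 ha hp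
    show stepC d₀ F k (j+1) x (p + a) = _
    unfold stepC
    rw [← hm, hbase]
    have : p + a - a = p := by abel
    rw [this]
  -- Key 2: each old aligned m-block is hereditarily canonical
  have key2 : ∀ a : Cell, Algn m a → HC d₀ F k (j+1) (translateCfg a x) := by
    intro a ha
    refine HC_succ_iff.2 ⟨good_of_shift hx.1 m a, fun d => ?_⟩
    rw [tr_tr]
    have halg : Algn (nsz k j) (qofs k j d + a) := by
      obtain ⟨⟨z1, hz1⟩, ⟨z2, hz2⟩⟩ := ha
      have h2 : (m : ℤ) = 2 * (nsz k j : ℤ) := by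
        have := nsz_succ k j; rw [hm]; push_cast [this]; ring
      constructor
      · exact ⟨(d.1 : ℤ) + 2 * z1, by
          show (d.1 : ℤ) * (nsz k j : ℤ) + a.1 = _
          rw [hz1, h2]; ring⟩
      · exact ⟨(d.2 : ℤ) + 2 * z2, by
          show (d.2 : ℤ) * (nsz k j : ℤ) + a.2 = _
          rw [hz2, h2]; ring⟩
    exact hx.2 j (le_refl j) _ halg
  -- membership in the shift
  have hmem : y ∈ shiftOf F := by
    refine swap_mem hk hkm hwin hx.1 (fun a ha => ?_) (fun a ha p hp => ?_)
    · have hcan := (canLv_spec' (key2 a ha)).1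
      exact GoodIn_congr (EqB.symm (key1 a ha)) (HC_good hcan)
    · have h1 := key1 a ha p (frCell_inBn hp)
      rw [h1]
      have h2 := (canLv_spec' (key2 a ha)).2
      have := congrFun h2 p
      rw [← hm] at this
      simpa [fR, hp] using this
  refine ⟨hmem, fun i hi a ha => ?_⟩
  -- locate a inside its containing aligned m-block
  have hni : 0 < nsz k i := nsz_pos hk i
  have hdvd : ((nsz k i : ℕ) : ℤ) ∣ ((m : ℕ) : ℤ) := nsz_dvd hi
  set A := ibase m a with hA
  set b := a - A with hb
  have hAalg : Algn m A := ibase_algn m a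
  have hbin : inBn m b := by
    rw [hb, hA]; exact sub_ibase_inBn hm0 a
  have hbalg : Algn (nsz k i) b := by
    obtain ⟨⟨z1, hz1⟩, ⟨z2, hz2⟩⟩ := ha
    obtain ⟨⟨w1, hw1⟩, ⟨w2, hw2⟩⟩ := hAalg
    obtain ⟨v, hv⟩ := hdvd
    constructor
    · exact ⟨z1 - v * w1, by show a.1 - A.1 = _; rw [hz1, hw1, hv]; ring⟩
    · exact ⟨z2 - v * w2, by show a.2 - A.2 = _; rw [hz2, hw2, hv]; ring⟩
  have hblk : InBlk (nsz k i) m b := by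
    obtain ⟨c1, c2, c3, c4⟩ := hbin
    exact ⟨c1, dvd_add_le (by exact_mod_cast hni) hbalg.1 c2 hdvd, c3,
      dvd_add_le (by exact_mod_cast hni) hbalg.2 c4 hdvd⟩
  have hsum : b + A = a := by rw [hb]; abel
  have htr : translateCfg a y = translateCfg b (translateCfg A y) := by
    rw [tr_tr, hsum]
  set G := canLv d₀ F k (j+1) (fR d₀ k m (translateCfg A x)) with hG
  have hGHC : HC d₀ F k (j+1) G := (canLv_spec' (key2 A hAalg)).1
  have hGeq : EqB (nsz k i) (translateCfg b G) (translateCfg a y) := by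
    rw [htr]
    exact EqB.symm (EqB_tr_sub (key1 A hAalg) hblk)
  rcases Nat.lt_or_ge i (j+1) with hii | hii
  · obtain ⟨hHC, hCan⟩ := descent hk (j+1) G hGHC i hii b hbalg hblk
    exact ⟨HC_congr i hGeq hHC, CanonAt_congr hGeq hCan⟩
  · have hij : i = j + 1 := le_antisymm hi hii
    subst hij
    have hb0 : b = 0 := by
      obtain ⟨c1, c2, c3, c4⟩ := hblk
      have e1 : b.1 = 0 := by omega
      have e2 : b.2 = 0 := by omega
      exact Prod.ext (by rw [e1]; rfl) (by rw [e2]; rfl)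
    rw [hb0, tr_zero] at hGeq
    exact ⟨HC_congr (j+1) hGeq hGHC,
      CanonAt_congr hGeq (canonAt_canLv (key2 A hAalg))⟩

lemma inv_all {d₀ : B} {F : Set (Pattern B)} {k : ℕ} (hk : 1 ≤ k)
    (hwin : ∀ P ∈ F, ∃ v : Cell, ∀ i ∈ P.supp, inBn k ((i : Cell) - v))
    {x₀ : Config B} (hx₀ : x₀ ∈ shiftOf F) (j : ℕ) :
    Inv d₀ F k (seqC d₀ F k x₀ j) j := by
  induction j with
  | zero => exact inv_zero hk hx₀
  | succ j ih => exact inv_step hk hwin ih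

end SoficAux
namespace SoficAux

open Filter

variable {B : Type}

/-- Pointwise limit of a sequence of configurations along an ultrafilter. -/
noncomputable def limC [Finite B] (X : ℕ → Config B) : Config B := fun p =>
  (Ultrafilter.eq_pure_of_finite ((hyperfilter ℕ).map (fun j => X j p))).choose

lemma limC_mem [Finite B] (X : ℕ → Config B) (p : Cell) :
    {j | X j p = limC X p} ∈ hyperfilter ℕ := by
  have h := (Ultrafilter.eq_pure_of_finite ((hyperfilter ℕ).map (fun j => X j p))).choose_spec
  have h2 : ({limC X p} : Set B) ∈ (hyperfilter ℕ).map (fun j => X j p) := by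
    rw [h]
    exact rfl
  have h3 : (fun j => X j p) ⁻¹' ({limC X p} : Set B) ∈ (hyperfilter ℕ) :=
    Ultrafilter.mem_map.1 h2
  exact h3

lemma limC_agree [Finite B] (X : ℕ → Config B) {E : Set Cell} (hE : E.Finite) :
    {j | ∀ p ∈ E, X j p = limC X p} ∈ hyperfilter ℕ := by
  have heq : {j | ∀ p ∈ E, X j p = limC X p} = ⋂ p ∈ E, {j | X j p = limC X p} := by
    ext j; simp
  rw [heq]
  exact (Filter.biInter_mem hE).2 fun p _ => limC_mem X p

lemma limC_agree_ge [Finite B] (X : ℕ → Config B) {E : Set Cell} (hE : E.Finite) (i : ℕ) :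
    ∃ j, i ≤ j ∧ ∀ p ∈ E, X j p = limC X p := by
  have h1 := limC_agree X hE
  have h2 : (Set.Iio i)ᶜ ∈ hyperfilter ℕ :=
    compl_mem_hyperfilter_of_finite (Set.finite_Iio i)
  have h3 := Filter.inter_mem h2 h1
  obtain ⟨j, hj1, hj2⟩ := Filter.nonempty_of_mem h3
  exact ⟨j, by simpa using hj1, hj2⟩

end SoficAux
namespace SoficAux

variable {B : Type}

noncomputable def cellsF (m : ℕ) : Finset Cell :=
  Finset.Ico (0:ℤ) (m:ℤ) ×ˢ Finset.Ico (0:ℤ) (m:ℤ)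

lemma mem_cellsF {m : ℕ} {p : Cell} : p ∈ cellsF m ↔ inBn m p := by
  simp only [cellsF, Finset.mem_product, Finset.mem_Ico, inBn]
  tauto

/-- The frame cells as a finset. -/
noncomputable def frF (k m : ℕ) : Finset Cell := (cellsF m).filter (frCell k m)

lemma mem_frF {k m : ℕ} {p : Cell} : p ∈ frF k m ↔ frCell k m p := by
  simp only [frF, Finset.mem_filter, mem_cellsF]
  exact ⟨fun h => h.2, fun h => ⟨h.1, h⟩⟩

lemma frF_card {k m : ℕ} : (frF k m).card ≤ 4 * (k * m) := by
  classical
  set s1 : Finset Cell := Finset.Ico (0:ℤ) (k:ℤ) ×ˢ Finset.Ico (0:ℤ) (m:ℤ)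
  set s2 : Finset Cell := Finset.Ico ((m:ℤ) - k) (m:ℤ) ×ˢ Finset.Ico (0:ℤ) (m:ℤ)
  set s3 : Finset Cell := Finset.Ico (0:ℤ) (m:ℤ) ×ˢ Finset.Ico (0:ℤ) (k:ℤ)
  set s4 : Finset Cell := Finset.Ico (0:ℤ) (m:ℤ) ×ˢ Finset.Ico ((m:ℤ) - k) (m:ℤ)
  have hsub : frF k m ⊆ s1 ∪ s2 ∪ s3 ∪ s4 := by
    intro p hp
    rw [mem_frF] at hp
    obtain ⟨⟨b1, b2, b3, b4⟩, h⟩ := hp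
    simp only [Finset.mem_union, s1, s2, s3, s4, Finset.mem_product, Finset.mem_Ico]
    rcases h with h | h | h | h
    · exact Or.inl (Or.inl (Or.inl ⟨⟨b1, h⟩, b3, b4⟩))
    · exact Or.inl (Or.inl (Or.inr ⟨⟨by omega, b2⟩, b3, b4⟩))
    · exact Or.inl (Or.inr ⟨⟨b1, b2⟩, b3, h⟩)
    · exact Or.inr ⟨⟨b1, b2⟩, by omega, b4⟩
  have hc1 : s1.card = k * m := by
    simp [s1, Int.card_Ico]
  have hc2 : s2.card ≤ k * m := by
    have : ((m:ℤ) - ((m:ℤ) - k)).toNat = k := by omega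
    simp [s2, Int.card_Ico, this]
  have hc3 : s3.card = m * k := by
    simp [s3, Int.card_Ico]
  have hc4 : s4.card ≤ m * k := by
    have : ((m:ℤ) - ((m:ℤ) - k)).toNat = k := by omega
    simp [s4, Int.card_Ico, this]
  calc (frF k m).card ≤ (s1 ∪ s2 ∪ s3 ∪ s4).card := Finset.card_le_card hsub
    _ ≤ s1.card + s2.card + s3.card + s4.card := by
        calc (s1 ∪ s2 ∪ s3 ∪ s4).card ≤ (s1 ∪ s2 ∪ s3).card + s4.card :=
              Finset.card_union_le _ _
          _ ≤ ((s1 ∪ s2).card + s3.card) + s4.card := by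
              gcongr
              exact Finset.card_union_le _ _
          _ ≤ ((s1.card + s2.card) + s3.card) + s4.card := by
              gcongr
              exact Finset.card_union_le _ _
    _ ≤ k * m + k * m + m * k + m * k := by omega
    _ = 4 * (k * m) := by ring

lemma exists_scale {k : ℕ} (hk : 1 ≤ k) (n : ℕ) (hn : 1 ≤ n) :
    ∃ i, n ≤ nsz k i ∧ nsz k i ≤ 2 * k * n := by
  have hex : ∃ i, n ≤ nsz k i := by
    refine ⟨n, ?_⟩
    calc n ≤ 2 ^ n := Nat.le_of_lt (Nat.lt_two_pow_self (n := n))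
      _ = 1 * 2 ^ n := (one_mul _).symm
      _ ≤ k * 2 ^ n := Nat.mul_le_mul_right _ hk
  refine ⟨Nat.find hex, Nat.find_spec hex, ?_⟩
  rcases Nat.eq_zero_or_pos (Nat.find hex) with h0 | h0
  · rw [h0]
    have : nsz k 0 = k := by simp [nsz]
    rw [this]
    calc k = k * 1 := (mul_one k).symm
      _ ≤ 2 * k * n := by nlinarith
  · obtain ⟨i', hi'⟩ := Nat.exists_eq_add_of_lt h0
    have hfind : Nat.find hex = i' + 1 := by omega
    have hmin : ¬ n ≤ nsz k i' := Nat.find_min hex (by omega)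
    push_neg at hmin
    rw [hfind, nsz_succ]
    calc 2 * nsz k i' ≤ 2 * n := by omega
      _ ≤ 2 * k * n := by nlinarith

/-- Existence of a configuration in the shift all of whose aligned blocks are canonical. -/
lemma exists_canonical_config [Finite B] {F : Set (Pattern B)} {k : ℕ} (hk : 1 ≤ k)
    (hwin : ∀ P ∈ F, ∃ v : Cell, ∀ i ∈ P.supp, inBn k ((i : Cell) - v))
    (hne : (shiftOf F).Nonempty) :
    ∃ (d₀ : B) (xs : Config B), xs ∈ shiftOf F ∧
      ∀ i, ∀ a : Cell, Algn (nsz k i) a → CanonAt d₀ F k i (translateCfg a xs) := by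
  obtain ⟨x₀, hx₀⟩ := hne
  set d₀ : B := x₀ (0, 0) with hd₀
  set X : ℕ → Config B := seqC d₀ F k x₀ with hX
  set xs : Config B := limC X with hxs
  refine ⟨d₀, xs, ?_, ?_⟩
  · intro P hP hocc
    obtain ⟨u, hu⟩ := hocc
    have hE : (↑(P.supp.image (fun i => i + u)) : Set Cell).Finite := Finset.finite_toSet _
    obtain ⟨j, _, hj⟩ := limC_agree_ge X hE 0
    refine (inv_all (d₀ := d₀) hk hwin hx₀ j).1 P hP ⟨u, fun i => ?_⟩
    have hmem : ((i : Cell) + u) ∈ (↑(P.supp.image (fun i => i + u)) : Set Cell) := by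
      simp only [Finset.coe_image, Set.mem_image, Finset.mem_coe]
      exact ⟨(i : Cell), i.2, rfl⟩
    show X j ((i : Cell) + u) = P.val i
    rw [hj ((i : Cell) + u) hmem]
    exact hu i
  · intro i a halg
    have hE : (↑((cellsF (nsz k i)).image (fun p => p + a)) : Set Cell).Finite :=
      Finset.finite_toSet _
    obtain ⟨j, hij, hj⟩ := limC_agree_ge X hE i
    have hcan := ((inv_all (d₀ := d₀) hk hwin hx₀ j).2 i hij a halg).2
    refine CanonAt_congr (fun p hp => ?_) hcan
    show X j (p + a) = xs (p + a)
    exact hj (p + a) (by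
      simp only [Finset.coe_image, Set.mem_image, Finset.mem_coe]
      exact ⟨p, mem_cellsF.2 hp, rfl⟩)

end SoficAux
namespace SoficAux

variable {A B : Type}

lemma count_patterns [Fintype A] [Fintype B] (π : B → A) {F : Set (Pattern B)} {k : ℕ}
    (hk : 1 ≤ k) {d₀ : B} {xs : Config B}
    (hcan : ∀ i, ∀ a : Cell, Algn (nsz k i) a → CanonAt d₀ F k i (translateCfg a xs))
    (n : ℕ) (i : ℕ) (hnm : n ≤ nsz k i) :
    {P : SqPattern A n | SqOccursIn P (π ∘ xs)}.ncard ≤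
      (nsz k i) ^ 2 * (Fintype.card B) ^ (4 * (frF k (nsz k i)).card) := by
  classical
  set m := nsz k i with hmdef
  have hm0 : 0 < m := nsz_pos hk i
  have hmz : (0:ℤ) < (m:ℤ) := by exact_mod_cast hm0
  -- the realization map
  set f : ((Fin m × Fin m) × ((Fin 2 × Fin 2) → ({ p // p ∈ frF k m } → B))) → SqPattern A n :=
    fun z q =>
    let ext : (Fin 2 × Fin 2) → Config B := fun d p =>
      if h : p ∈ frF k m then z.2 d ⟨p, h⟩ else d₀
    let G : (Fin 2 × Fin 2) → Config B := fun d => canLv d₀ F k i (ext d)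
    let asm : Config B := fun p =>
      if p.1 < (m:ℤ) then (if p.2 < (m:ℤ) then G (0,0) p else G (0,1) (p - ((0:ℤ),(m:ℤ))))
      else (if p.2 < (m:ℤ) then G (1,0) (p - ((m:ℤ),(0:ℤ))) else G (1,1) (p - ((m:ℤ),(m:ℤ))))
    π (asm (toCell q + toCell z.1))
    with hf
  have hq00 : qofs k i ((0:Fin 2),(0:Fin 2)) = ((0:ℤ),(0:ℤ)) := by
    simp [qofs]
  have hq01 : qofs k i ((0:Fin 2),(1:Fin 2)) = ((0:ℤ),(m:ℤ)) := by
    simp [qofs, hmdef]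
  have hq10 : qofs k i ((1:Fin 2),(0:Fin 2)) = ((m:ℤ),(0:ℤ)) := by
    simp [qofs, hmdef]
  have hq11 : qofs k i ((1:Fin 2),(1:Fin 2)) = ((m:ℤ),(m:ℤ)) := by
    simp [qofs, hmdef]
  -- every occurring pattern is in the range of f
  have hsub : {P : SqPattern A n | SqOccursIn P (π ∘ xs)} ⊆ Set.range f := by
    intro P hP
    obtain ⟨u, hu⟩ := hP
    set a := ibase m u with hadef
    have hbin : inBn m (u - a) := sub_ibase_inBn hm0 u
    obtain ⟨c1, c2, c3, c4⟩ := hbin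
    have c1' : (0:ℤ) ≤ u.1 - a.1 := c1
    have c2' : u.1 - a.1 < (m:ℤ) := c2
    have c3' : (0:ℤ) ≤ u.2 - a.2 := c3
    have c4' : u.2 - a.2 < (m:ℤ) := c4
    set r : Fin m × Fin m := (⟨(u.1 - a.1).toNat, by omega⟩, ⟨(u.2 - a.2).toNat, by omega⟩)
      with hrdef
    have hrc : toCell r = u - a := by
      have e1 : ((u.1 - a.1).toNat : ℤ) = u.1 - a.1 := Int.toNat_of_nonneg c1
      have e2 : ((u.2 - a.2).toNat : ℤ) = u.2 - a.2 := Int.toNat_of_nonneg c3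
      exact Prod.ext e1 e2
    set ρ : (Fin 2 × Fin 2) → ({ p // p ∈ frF k m } → B) := fun d p =>
      xs ((p : Cell) + (a + qofs k i d)) with hρ
    refine ⟨(r, ρ), ?_⟩
    funext q
    -- the canonical blocks reproduce xs
    have hGx : ∀ d : Fin 2 × Fin 2, ∀ p' : Cell, inBn m p' →
        canLv d₀ F k i (fun p => if h : p ∈ frF k m then ρ d ⟨p, h⟩ else d₀) p'
          = xs (p' + (a + qofs k i d)) := by
      intro d p' hp'
      have halg : Algn m (a + qofs k i d) := by
        obtain ⟨⟨w1, hw1⟩, ⟨w2, hw2⟩⟩ := ibase_algn m u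
        refine ⟨⟨w1 + (d.1 : ℤ), ?_⟩, ⟨w2 + (d.2 : ℤ), ?_⟩⟩
        · show a.1 + (d.1 : ℤ) * (m:ℤ) = _
          rw [← hadef] at hw1
          rw [hw1]; ring
        · show a.2 + (d.2 : ℤ) * (m:ℤ) = _
          rw [← hadef] at hw2
          rw [hw2]; ring
      have hcan' := hcan i (a + qofs k i d) halg
      have hext : (fun p => if h : p ∈ frF k m then ρ d ⟨p, h⟩ else d₀)
          = fR d₀ k m (translateCfg (a + qofs k i d) xs) := by
        funext p
        by_cases h : frCell k m p
        · rw [dif_pos (mem_frF.2 h)]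
          rw [fR, if_pos h]
          rfl
        · rw [dif_neg (fun hc => h (mem_frF.1 hc))]
          rw [fR, if_neg h]
      rw [hext]
      exact (hcan' p' hp').symm
    -- the assembled configuration reproduces xs on B_{2m}
    have hasm : ∀ p : Cell, inBn (2*m) p →
        (if p.1 < (m:ℤ) then (if p.2 < (m:ℤ)
            then canLv d₀ F k i (fun pp => if h : pp ∈ frF k m then ρ (0,0) ⟨pp, h⟩ else d₀) p
            else canLv d₀ F k i (fun pp => if h : pp ∈ frF k m then ρ (0,1) ⟨pp, h⟩ else d₀)
              (p - ((0:ℤ),(m:ℤ))))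
          else (if p.2 < (m:ℤ)
            then canLv d₀ F k i (fun pp => if h : pp ∈ frF k m then ρ (1,0) ⟨pp, h⟩ else d₀)
              (p - ((m:ℤ),(0:ℤ)))
            else canLv d₀ F k i (fun pp => if h : pp ∈ frF k m then ρ (1,1) ⟨pp, h⟩ else d₀)
              (p - ((m:ℤ),(m:ℤ))))) = xs (p + a) := by
      intro p hp
      obtain ⟨e1, e2, e3, e4⟩ := hp
      have h2m : ((2*m : ℕ) : ℤ) = 2 * (m:ℤ) := by push_cast; ring
      rw [h2m] at e2 e4
      by_cases hx1 : p.1 < (m:ℤ) <;> by_cases hx2 : p.2 < (m:ℤ)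
      · rw [if_pos hx1, if_pos hx2, hGx (0,0) p ⟨e1, hx1, e3, hx2⟩, hq00]
        congr 1
        abel
      · rw [if_pos hx1, if_neg hx2]
        have hsub2 : (p - ((0:ℤ),(m:ℤ))).1 = p.1 ∧ (p - ((0:ℤ),(m:ℤ))).2 = p.2 - m :=
          ⟨by simp, by simp⟩
        rw [hGx (0,1) _ ⟨by omega, by omega, by omega, by omega⟩, hq01]
        congr 1
        abel
      · rw [if_neg hx1, if_pos hx2]
        have hsub2 : (p - ((m:ℤ),(0:ℤ))).1 = p.1 - m ∧ (p - ((m:ℤ),(0:ℤ))).2 = p.2 :=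
          ⟨by simp, by simp⟩
        rw [hGx (1,0) _ ⟨by omega, by omega, by omega, by omega⟩, hq10]
        congr 1
        abel
      · rw [if_neg hx1, if_neg hx2]
        have hsub2 : (p - ((m:ℤ),(m:ℤ))).1 = p.1 - m ∧ (p - ((m:ℤ),(m:ℤ))).2 = p.2 - m :=
          ⟨by simp, by simp⟩
        rw [hGx (1,1) _ ⟨by omega, by omega, by omega, by omega⟩, hq11]
        congr 1
        abel
    -- conclude
    have hcell : inBn (2*m) (toCell q + toCell r) := by
      have g1 : (toCell q + toCell r).1 = ((q.1 : ℕ) : ℤ) + ((r.1 : ℕ) : ℤ) := rfl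
      have g2 : (toCell q + toCell r).2 = ((q.2 : ℕ) : ℤ) + ((r.2 : ℕ) : ℤ) := rfl
      have b1 : (q.1 : ℕ) < n := q.1.2
      have b2 : (q.2 : ℕ) < n := q.2.2
      have b3 : (r.1 : ℕ) < m := r.1.2
      have b4 : (r.2 : ℕ) < m := r.2.2
      have h2m : ((2*m : ℕ) : ℤ) = 2 * (m:ℤ) := by push_cast; ring
      refine ⟨by rw [g1]; positivity, ?_, by rw [g2]; positivity, ?_⟩
      · rw [g1, h2m]
        have : ((q.1 : ℕ) : ℤ) < (n:ℤ) := by exact_mod_cast b1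
        have : ((r.1 : ℕ) : ℤ) < (m:ℤ) := by exact_mod_cast b3
        have hnm' : (n:ℤ) ≤ (m:ℤ) := by exact_mod_cast hnm
        omega
      · rw [g2, h2m]
        have : ((q.2 : ℕ) : ℤ) < (n:ℤ) := by exact_mod_cast b2
        have : ((r.2 : ℕ) : ℤ) < (m:ℤ) := by exact_mod_cast b4
        have hnm' : (n:ℤ) ≤ (m:ℤ) := by exact_mod_cast hnm
        omega
    have hh := hasm (toCell q + toCell r) hcell
    calc f (r, ρ) q = π (xs ((toCell q + toCell r) + a)) := congrArg π hh
      _ = P q := by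
          have h3 : (toCell q + toCell r) + a = toCell q + u := by
            rw [hrc]
            abel
          rw [h3]
          exact hu q
  -- cardinality bound
  have hcard : Fintype.card ((Fin m × Fin m) × ((Fin 2 × Fin 2) → ({ p // p ∈ frF k m } → B)))
      ≤ m ^ 2 * (Fintype.card B) ^ (4 * (frF k m).card) := by
    rw [Fintype.card_prod, Fintype.card_prod, Fintype.card_fin]
    rw [Fintype.card_fun, Fintype.card_fun]
    rw [Fintype.card_prod, Fintype.card_fin, Fintype.card_coe]
    have : ((Fintype.card B) ^ (frF k m).card) ^ (2 * 2) =
        (Fintype.card B) ^ (4 * (frF k m).card) := by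
      rw [← pow_mul]
      ring_nf
    rw [this]
    have : m * m = m ^ 2 := by ring
    rw [this]
  calc {P : SqPattern A n | SqOccursIn P (π ∘ xs)}.ncard
      ≤ (Set.range f).ncard := Set.ncard_le_ncard hsub (Set.finite_range f)
    _ ≤ Fintype.card ((Fin m × Fin m) × ((Fin 2 × Fin 2) → ({ p // p ∈ frF k m } → B))) := by
        rw [← Set.image_univ]
        refine le_trans (Set.ncard_image_le Set.finite_univ) ?_
        rw [Set.ncard_univ, Nat.card_eq_fintype_card]
    _ ≤ m ^ 2 * (Fintype.card B) ^ (4 * (frF k m).card) := hcard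

end SoficAux

open SoficAux

/-- For every nonempty sofic shift `S` on `ℤ²` over a finite alphabet `A`, there exist a
configuration `x ∈ S` and a constant `c > 0` such that for every `n ≥ 1` the number of
distinct `n × n` square patterns occurring in `x` is at most `2 ^ (c · n)`. -/
theorem sofic_has_low_complexity_config {A : Type} [Fintype A] (S : Set (Config A))
    (hsofic : IsSofic S) (hne : S.Nonempty) :
    ∃ x ∈ S, ∃ c : ℕ, 0 < c ∧ ∀ n : ℕ, 1 ≤ n →
      {P : SqPattern A n | SqOccursIn P x}.ncard ≤ 2 ^ (c * n) := by
  classical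
  obtain ⟨B, hBfin, S', π, ⟨F, hFfin, rfl⟩, hSimg⟩ := hsofic
  haveI : Fintype B := hBfin
  haveI : Finite B := Finite.of_fintype B
  -- the shift of finite type is nonempty
  have hne' : (shiftOf F).Nonempty := by
    obtain ⟨x, hx⟩ := hne
    rw [hSimg] at hx
    obtain ⟨y, hy, _⟩ := hx
    exact ⟨y, hy⟩
  -- choose a window size k
  set KF : Pattern B → ℕ :=
    fun P => 2 * (P.supp.sup (fun i => max i.1.natAbs i.2.natAbs)) + 1 with hKF
  set k : ℕ := 1 + hFfin.toFinset.sup KF with hkdef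
  have hk : 1 ≤ k := by omega
  have hwin : ∀ P ∈ F, ∃ v : Cell, ∀ i ∈ P.supp, inBn k ((i : Cell) - v) := by
    intro P hP
    set M : ℕ := P.supp.sup (fun i => max i.1.natAbs i.2.natAbs) with hM
    refine ⟨(-(M:ℤ), -(M:ℤ)), fun i hi => ?_⟩
    have hle : max i.1.natAbs i.2.natAbs ≤ M :=
      Finset.le_sup (f := fun i : Cell => max i.1.natAbs i.2.natAbs) hi
    have hKFle : KF P ≤ hFfin.toFinset.sup KF :=
      Finset.le_sup (Set.Finite.mem_toFinset hFfin |>.2 hP)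
    have hKFval : KF P = 2 * M + 1 := rfl
    have hkM : 2 * M + 1 ≤ k := by omega
    have g1 : (i - (-(M:ℤ), -(M:ℤ))).1 = i.1 + M := by simp
    have g2 : (i - (-(M:ℤ), -(M:ℤ))).2 = i.2 + M := by simp
    have hi1 : i.1.natAbs ≤ M := le_trans (le_max_left _ _) hle
    have hi2 : i.2.natAbs ≤ M := le_trans (le_max_right _ _) hle
    refine ⟨?_, ?_, ?_, ?_⟩
    · rw [g1]; omega
    · rw [g1]; omega
    · rw [g2]; omega
    · rw [g2]; omega
  -- the canonical configuration
  obtain ⟨d₀, xs, hxsmem, hxscan⟩ := exists_canonical_config (k := k) hk hwin hne'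
  haveI : Nonempty B := ⟨d₀⟩
  set β : ℕ := Fintype.card B with hβ
  have hβ1 : 1 ≤ β := Fintype.card_pos
  refine ⟨π ∘ xs, by rw [hSimg]; exact ⟨xs, hxsmem, rfl⟩, 32 * β * k^2 + 2*k + 4,
    by positivity, fun n hn => ?_⟩
  obtain ⟨i, hni, him⟩ := exists_scale hk n hn
  set m : ℕ := nsz k i with hm
  have hbase := count_patterns π hk hxscan n i hni
  have hfr : 4 * (frF k m).card ≤ 16 * (k * m) := by
    have := frF_card (k := k) (m := m)
    omega
  have step1 : m ^ 2 * β ^ (4 * (frF k m).card) ≤ m ^ 2 * β ^ (16 * (k * m)) :=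
    Nat.mul_le_mul_left _ (Nat.pow_le_pow_right hβ1 hfr)
  have step2 : m ^ 2 * β ^ (16 * (k * m)) ≤ (2*k*n) ^ 2 * β ^ (32 * k^2 * n) := by
    have e1 : m ^ 2 ≤ (2*k*n) ^ 2 := Nat.pow_le_pow_left him 2
    have e2 : 16 * (k * m) ≤ 32 * k^2 * n := by
      calc 16 * (k * m) ≤ 16 * (k * (2*k*n)) := by
            have := Nat.mul_le_mul_left k him
            omega
        _ = 32 * k^2 * n := by ring
    exact Nat.mul_le_mul e1 (Nat.pow_le_pow_right hβ1 e2)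
  have step3 : (2*k*n) ^ 2 * β ^ (32 * k^2 * n) ≤
      2 ^ (2 + 2*k + 2*n) * 2 ^ (β * (32 * k^2 * n)) := by
    have e1 : (2*k*n)^2 ≤ 2 ^ (2 + 2*k + 2*n) := by
      have hk2 : k ≤ 2 ^ k := Nat.le_of_lt (Nat.lt_two_pow_self (n := k))
      have hn2 : n ≤ 2 ^ n := Nat.le_of_lt (Nat.lt_two_pow_self (n := n))
      calc (2*k*n)^2 = 2^2 * (k^2 * n^2) := by ring
        _ ≤ 2^2 * ((2^k)^2 * (2^n)^2) := by
            have := Nat.mul_le_mul (Nat.pow_le_pow_left hk2 2) (Nat.pow_le_pow_left hn2 2)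
            exact Nat.mul_le_mul_left _ this
        _ = 2 ^ (2 + 2*k + 2*n) := by
            rw [← pow_mul, ← pow_mul, ← pow_add, ← pow_add]
            ring_nf
    have e2 : β ^ (32 * k^2 * n) ≤ 2 ^ (β * (32 * k^2 * n)) := by
      calc β ^ (32 * k^2 * n) ≤ (2^β) ^ (32 * k^2 * n) :=
            Nat.pow_le_pow_left (Nat.le_of_lt (Nat.lt_two_pow_self (n := β))) _
        _ = 2 ^ (β * (32 * k^2 * n)) := by rw [← pow_mul]
    exact Nat.mul_le_mul e1 e2
  have step4 : 2 ^ (2 + 2*k + 2*n) * 2 ^ (β * (32 * k^2 * n)) ≤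
      2 ^ ((32 * β * k^2 + 2*k + 4) * n) := by
    rw [← pow_add]
    refine Nat.pow_le_pow_right (by norm_num) ?_
    have h1 : 2*k + 2 ≤ 2*k*n + 2*n := by nlinarith
    nlinarith
  calc {P : SqPattern A n | SqOccursIn P (π ∘ xs)}.ncard
      ≤ m ^ 2 * β ^ (4 * (frF k m).card) := hbase
    _ ≤ m ^ 2 * β ^ (16 * (k * m)) := step1
    _ ≤ (2*k*n) ^ 2 * β ^ (32 * k^2 * n) := step2
    _ ≤ 2 ^ (2 + 2*k + 2*n) * 2 ^ (β * (32 * k^2 * n)) := step3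
    _ ≤ 2 ^ ((32 * β * k^2 + 2*k + 4) * n) := step4
end

section
/- Let S be a shift on ℤ² over a finite alphabet A. Suppose that for every real M > 0 there exist an integer n > 0, an integer m > M^n, and globally admissible patterns P_1, …, P_m : B_n → A such that Ext_S(P_1), …, Ext_S(P_m) is an increasing-union chain. Then S is not sofic. -/
section KM

/-- Splicing lemma: if two points of an SFT agree on the width-`r` annulus around `B_n`,
then the configuration equal to one inside `B_n` and the other outside is in the SFT. -/
lemma splice_mem_shiftOf {A' : Type} (F : Set (Pattern A')) (r n : ℕ)
    (hr : ∀ P ∈ F, ∀ i ∈ P.supp, ∀ j ∈ P.supp,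
      (i.1 - j.1).natAbs ≤ r ∧ (i.2 - j.2).natAbs ≤ r)
    (y y' : Config A') (hy : y ∈ shiftOf F) (hy' : y' ∈ shiftOf F)
    (hagree : ∀ p : Cell, ¬ inBn n p → -(r:ℤ) ≤ p.1 → p.1 < (n:ℤ) + r →
      -(r:ℤ) ≤ p.2 → p.2 < (n:ℤ) + r → y p = y' p) :
    (fun p => if inBn n p then y' p else y p) ∈ shiftOf F := by
  intro P hP hocc
  obtain ⟨u, hu⟩ := hocc
  by_cases hc : ∃ i : P.supp, inBn n ((i : Cell) + u)
  · obtain ⟨i0, hi0⟩ := hc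
    refine hy' P hP ⟨u, fun j => ?_⟩
    have hj := hu j
    by_cases hjb : inBn n ((j : Cell) + u)
    · simpa [hjb] using hj
    · simp only [hjb, if_false] at hj
      rw [← hagree ((j : Cell) + u) hjb ?_ ?_ ?_ ?_]
      · exact hj
      all_goals {
        have hd := hr P hP (j : Cell) j.2 (i0 : Cell) i0.2
        unfold inBn at hi0
        simp only [Prod.fst_add, Prod.snd_add] at hi0 ⊢
        omega }
  · push_neg at hc
    refine hy P hP ⟨u, fun j => ?_⟩
    have hj := hu j
    simpa [hc j] using hj

end KM

/-- (Kass–Madden) Let `S` be a shift on `ℤ²` over a finite alphabet `A`. If for every real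
`M > 0` there exist `n > 0`, `m > M^n`, and globally admissible patterns
`P₁, …, P_m : B_n → A` whose extension sets form an increasing-union chain, then `S` is
not sofic. -/
theorem kass_madden_not_sofic {A : Type} [Fintype A] (S : Set (Config A))
    (hshift : IsShiftSpace S)
    (h : ∀ M : ℝ, 0 < M → ∃ (n m : ℕ), 0 < n ∧ M ^ n < (m : ℝ) ∧
      ∃ P : Fin m → SqPattern A n,
        (∀ i, SqGloballyAdmissible S (P i)) ∧
        IncreasingUnionChain (fun i => ExtSet S (P i))) :
    ¬ IsSofic S := by
  rintro ⟨A', instA', S', π, ⟨F, hFfin, hS'⟩, hS⟩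
  -- radius of the SFT
  set r : ℕ := hFfin.toFinset.sup
      (fun P => 2 * P.supp.sup (fun i => i.1.natAbs ⊔ i.2.natAbs)) with hrdef
  have hr : ∀ P ∈ F, ∀ i ∈ P.supp, ∀ j ∈ P.supp,
      (i.1 - j.1).natAbs ≤ r ∧ (i.2 - j.2).natAbs ≤ r := by
    intro P hP i hi j hj
    have hle : 2 * P.supp.sup (fun i => i.1.natAbs ⊔ i.2.natAbs) ≤ r := by
      rw [hrdef]
      exact Finset.le_sup (f := fun P : Pattern A' => 2 * P.supp.sup fun i => i.1.natAbs ⊔ i.2.natAbs) (hFfin.mem_toFinset.mpr hP)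
    have h1 : i.1.natAbs ⊔ i.2.natAbs ≤ P.supp.sup (fun i => i.1.natAbs ⊔ i.2.natAbs) :=
      Finset.le_sup (f := fun i : Cell => i.1.natAbs ⊔ i.2.natAbs) hi
    have h2 : j.1.natAbs ⊔ j.2.natAbs ≤ P.supp.sup (fun i => i.1.natAbs ⊔ i.2.natAbs) :=
      Finset.le_sup (f := fun i : Cell => i.1.natAbs ⊔ i.2.natAbs) hj
    simp only [le_max_iff, max_le_iff, sup_le_iff] at h1 h2 ⊢
    omega
  -- the constant M
  set K : ℕ := 4 * r * r + 4 * r with hKdef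
  set C : ℕ := (Fintype.card A' + 1) ^ K with hCdef
  have hCpos : 0 < C := Nat.pow_pos (Nat.succ_pos _)
  obtain ⟨n, m, hn, hm, P, hadm, hchain⟩ := h (C : ℝ) (by exact_mod_cast hCpos)
  -- choose the witnesses from the chain condition
  have hQ : ∀ i : Fin m, ∃ Q, Q ∈ ExtSet S (P i) ∧
      Q ∉ ⋃ (j : Fin m) (_ : j < i), ExtSet S (P j) := by
    intro i
    have := hchain i
    rw [Set.not_subset] at this
    obtain ⟨Q, hQ1, hQ2⟩ := this
    exact ⟨Q, hQ1, hQ2⟩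
  choose Q hQmem hQnot using hQ
  -- choose covering points in the SFT
  have hy : ∀ i : Fin m, ∃ y, y ∈ S' ∧ (fun p => π (y p)) = glue (P i) (Q i) := by
    intro i
    have : glue (P i) (Q i) ∈ S := hQmem i
    rw [hS] at this
    obtain ⟨y, hy1, hy2⟩ := this
    exact ⟨y, hy1, hy2⟩
  choose y hyS hyπ using hy
  -- the annulus
  set box : Finset Cell :=
    Finset.Icc (-(r:ℤ)) ((n:ℤ)+r-1) ×ˢ Finset.Icc (-(r:ℤ)) ((n:ℤ)+r-1) with hboxdef
  set Rfin : Finset Cell := box.filter (fun p => ¬ inBn n p) with hRdef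
  -- boundary words
  set f : Fin m → ({p : Cell // p ∈ Rfin} → A') := fun i p => y i (p : Cell) with hfdef
  have key : ∀ i j : Fin m, j < i → f i = f j → False := by
    intro i j hji hfij
    -- splice
    have hagree : ∀ p : Cell, ¬ inBn n p → -(r:ℤ) ≤ p.1 → p.1 < (n:ℤ) + r →
        -(r:ℤ) ≤ p.2 → p.2 < (n:ℤ) + r → y i p = y j p := by
      intro p hp h1 h2 h3 h4
      have hpR : p ∈ Rfin := by
        rw [hRdef, Finset.mem_filter, hboxdef, Finset.mem_product, Finset.mem_Icc,
          Finset.mem_Icc]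
        exact ⟨⟨⟨h1, by omega⟩, ⟨h3, by omega⟩⟩, hp⟩
      exact congrFun hfij ⟨p, hpR⟩
    have hyiF : y i ∈ shiftOf F := hS' ▸ hyS i
    have hyjF : y j ∈ shiftOf F := hS' ▸ hyS j
    have hz := splice_mem_shiftOf F r n hr (y i) (y j) hyiF hyjF hagree
    set z : Config A' := fun p => if inBn n p then y j p else y i p with hzdef
    have hzS' : z ∈ S' := by rw [hS']; exact hz
    have hzglue : (fun p => π (z p)) = glue (P j) (Q i) := by
      funext p
      by_cases hp : inBn n p
      · have := congrFun (hyπ j) p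
        simp only [hzdef, hp, if_true]
        rw [this, glue, glue, dif_pos hp, dif_pos hp]
      · have := congrFun (hyπ i) p
        simp only [hzdef, hp, if_false]
        rw [this, glue, glue, dif_neg hp, dif_neg hp]
    have hQiExt : Q i ∈ ExtSet S (P j) := by
      show glue (P j) (Q i) ∈ S
      rw [hS]
      exact ⟨z, hzS', hzglue⟩
    exact hQnot i (Set.mem_biUnion hji hQiExt)
  have hinj : Function.Injective f := by
    intro i j hij
    by_contra hne
    rcases lt_or_gt_of_ne hne with hlt | hlt
    · exact key j i hlt hij.symm
    · exact key i j hlt hij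
  -- counting
  have hcard : m ≤ Fintype.card A' ^ Rfin.card := by
    have e := Fintype.card_le_of_injective f hinj
    rw [Fintype.card_fun, Fintype.card_coe, Fintype.card_fin] at e
    exact e
  have hboxcard : box.card = (n + 2*r) * (n + 2*r) := by
    rw [hboxdef, Finset.card_product, Int.card_Icc]
    have : ((n:ℤ) + r - 1 + 1 - -(r:ℤ)).toNat = n + 2*r := by omega
    rw [this]
  have hinside : (box.filter (fun p => inBn n p)).card = n * n := by
    have heq : box.filter (fun p => inBn n p)
        = Finset.Icc (0:ℤ) ((n:ℤ)-1) ×ˢ Finset.Icc (0:ℤ) ((n:ℤ)-1) := by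
      ext p
      simp only [hboxdef, Finset.mem_filter, Finset.mem_product, Finset.mem_Icc, inBn]
      omega
    rw [heq, Finset.card_product, Int.card_Icc]
    have : ((n:ℤ) - 1 + 1 - 0).toNat = n := by omega
    rw [this]
  have hsum : (box.filter (fun p => inBn n p)).card + Rfin.card = box.card := by
    rw [hRdef]
    exact Finset.card_filter_add_card_filter_not (p := fun p => inBn n p)
  have hRcard : Rfin.card = 4*r*n + 4*r*r := by
    rw [hinside, hboxcard] at hsum
    nlinarith [hsum]
  have hRle : Rfin.card ≤ K * n := by
    rw [hRcard, hKdef]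
    have h' : 4*r*r ≤ 4*r*r*n := Nat.le_mul_of_pos_right (4*r*r) hn
    nlinarith [h']
  have hfin : m ≤ C ^ n := by
    calc m ≤ Fintype.card A' ^ Rfin.card := hcard
    _ ≤ (Fintype.card A' + 1) ^ Rfin.card := Nat.pow_le_pow_left (Nat.le_succ _) _
    _ ≤ (Fintype.card A' + 1) ^ (K * n) :=
        Nat.pow_le_pow_right (Nat.succ_le_succ (Nat.zero_le _)) hRle
    _ = C ^ n := by rw [hCdef, pow_mul]
  have : (m : ℝ) ≤ (C : ℝ) ^ n := by exact_mod_cast hfin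
  linarith
end

section
/- Let S be a shift on ℤ² over a finite alphabet A, let n ≥ 1, and let P_1, …, P_m : B_n → A be globally admissible patterns such that Ext_S(P_1), …, Ext_S(P_m) is an increasing-union chain. Then there exists a partial order ≼ on {1,…,m} such that for every i ∈ {1,…,m} there exists Q : F_n → A with P_i ∪ Q ∈ S and, for every j ∈ {1,…,m} with P_j ∪ Q ∈ S, j ≼ i; that is, the injective partial map sending P_i to i (undefined on other patterns) together with ≼ satisfies the defining condition of ordered epitomes for S at level n. -/
/-- If `P₁, …, P_m : B_n → A` are globally admissible patterns of a shift `S` whose extension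
sets form an increasing-union chain, then there is a partial order `≼` on `{1,…,m}` such that
for every `i` there exists `Q : F_n → A` with `P_i ∪ Q ∈ S` and `j ≼ i` for every `j` with
`P_j ∪ Q ∈ S`; i.e. the partial map `P_i ↦ i` together with `≼` satisfies the defining
condition of ordered epitomes for `S` at level `n`. -/
theorem chain_yields_ordered_epitome {A : Type} [Fintype A] (S : Set (Config A))
    (hshift : IsShiftSpace S) (n : ℕ) (hn : 1 ≤ n) (m : ℕ)
    (P : Fin m → SqPattern A n)
    (hGA : ∀ i, SqGloballyAdmissible S (P i))
    (hchain : IncreasingUnionChain (fun i => ExtSet S (P i))) :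
    ∃ le : Fin m → Fin m → Prop, IsPartialOrder (Fin m) le ∧
      ∀ i : Fin m, ∃ Q : ExtPattern A n, glue (P i) Q ∈ S ∧
        ∀ j : Fin m, glue (P j) Q ∈ S → le j i := by
  refine ⟨fun a b => b ≤ a, ?_, ?_⟩
  · haveI h1 : IsRefl (Fin m) (fun a b => b ≤ a) := ⟨fun a => le_refl a⟩
    haveI h2 : IsTrans (Fin m) (fun a b => b ≤ a) := ⟨fun a b c h1 h2 => le_trans h2 h1⟩
    haveI h3 : IsAntisymm (Fin m) (fun a b => b ≤ a) := ⟨fun a b h1 h2 => le_antisymm h2 h1⟩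
    exact ⟨⟩
  · intro i
    have h := hchain i
    rw [Set.not_subset] at h
    obtain ⟨Q, hQ, hQn⟩ := h
    refine ⟨Q, hQ, fun j hj => ?_⟩
    by_contra hij
    exact hQn (Set.mem_iUnion.mpr ⟨j, Set.mem_iUnion.mpr ⟨lt_of_not_ge hij, hj⟩⟩)
end

section
/- Let S be a shift on ℤ² over a finite alphabet A and let (𝓔_n, ≼_n) be a family of ordered epitomes for S. Fix n ≥ 1 and let m be the number of distinct values taken by 𝓔_n on the globally admissible patterns B_n → A on which it is defined. Then there exist globally admissible patterns P_1, …, P_m : B_n → A such that Ext_S(P_1), …, Ext_S(P_m) is an increasing-union chain. -/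
/-- A family of ordered epitomes for a shift `S`: for each `n ≥ 1`, a finite partially
ordered set `(E n, le n)` and a partial function `Ep n` from `n × n` patterns to `E n`
such that for every globally admissible pattern `P` on which `Ep n` is defined there is a
configuration `Q` of the complement `F_n` with (i) `P ∪ Q ∈ S` and (ii) every pattern `P'`
in the domain of `Ep n` compatible with `Q` satisfies `Ep n P' ≼ Ep n P`. -/
def IsOrderedEpitomeFamily {A : Type} (S : Set (Config A)) (E : ℕ → Type)
    (le : ∀ n, E n → E n → Prop) (Ep : ∀ n, SqPattern A n → Option (E n)) : Prop :=
  (∀ n, Finite (E n)) ∧ (∀ n, IsPartialOrder (E n) (le n)) ∧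
  ∀ n : ℕ, 1 ≤ n → ∀ (P : SqPattern A n) (e : E n),
    SqGloballyAdmissible S P → Ep n P = some e →
    ∃ Q : ExtPattern A n, glue P Q ∈ S ∧
      ∀ (P' : SqPattern A n) (e' : E n), Ep n P' = some e' → glue P' Q ∈ S → le n e' e

/-- Let `(Ep n, le n)` be a family of ordered epitomes for a shift `S` over a finite
alphabet. Fix `n ≥ 1` and let `m` be the number of distinct values taken by `Ep n` on the
globally admissible patterns on which it is defined. Then there are globally admissible
patterns `P₁, …, P_m : B_n → A` whose extension sets form an increasing-union chain. -/
theorem epitome_yields_chain {A : Type} [Fintype A] (S : Set (Config A))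
    (hshift : IsShiftSpace S) (E : ℕ → Type) (le : ∀ n, E n → E n → Prop)
    (Ep : ∀ n, SqPattern A n → Option (E n))
    (hfam : IsOrderedEpitomeFamily S E le Ep)
    (n : ℕ) (hn : 1 ≤ n) (m : ℕ)
    (hm : m = {e : E n |
        ∃ P : SqPattern A n, SqGloballyAdmissible S P ∧ Ep n P = some e}.ncard) :
    ∃ P : Fin m → SqPattern A n,
      (∀ i, SqGloballyAdmissible S (P i)) ∧
      IncreasingUnionChain (fun i => ExtSet S (P i)) := by
  classical
  obtain ⟨hfin, hpo, hmain⟩ := hfam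
  set V : Set (E n) := {e : E n |
      ∃ P : SqPattern A n, SqGloballyAdmissible S P ∧ Ep n P = some e} with hVdef
  haveI : Finite (E n) := hfin n
  haveI : Fintype ↥V := Fintype.ofFinite _
  letI pord : PartialOrder (E n) :=
    { le := le n
      lt := fun a b => le n a b ∧ ¬ le n b a
      le_refl := (hpo n).refl
      le_trans := fun a b c hab hbc => (hpo n).trans a b c hab hbc
      le_antisymm := fun a b hab hba => (hpo n).antisymm a b hab hba
      lt_iff_le_not_ge := fun _ _ => Iff.rfl }
  haveI : Fintype (LinearExtension ↥V) := (inferInstance : Fintype ↥V)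
  have hcard : Fintype.card (LinearExtension ↥V) = m := by
    rw [hm, ← Nat.card_coe_set_eq, Nat.card_eq_fintype_card]
    exact Fintype.card_congr' rfl
  let σ : Fin m ≃o LinearExtension ↥V := monoEquivOfFin _ hcard
  -- enumerate the values in decreasing order of the linear extension
  have hrev : ∀ i : Fin m, m - 1 - (i : ℕ) < m := fun i => by omega
  let g : Fin m → ↥V := fun i => (σ ⟨m - 1 - i, hrev i⟩ : ↥V)
  have hg_key : ∀ i j : Fin m, le n (g j : E n) (g i : E n) → g j ≠ g i → i < j := by
    intro i j hle hne
    have hmono : (toLinearExtension (g j) : LinearExtension ↥V) ≤ toLinearExtension (g i) :=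
      toLinearExtension.monotone (show (g j : E n) ≤ (g i : E n) from hle)
    have hlt : (toLinearExtension (g j) : LinearExtension ↥V) < toLinearExtension (g i) :=
      lt_of_le_of_ne hmono (fun h => hne h)
    have hlt2 : σ ⟨m - 1 - j, hrev j⟩ < σ ⟨m - 1 - i, hrev i⟩ := hlt
    have := σ.lt_iff_lt.mp hlt2
    have hij : m - 1 - (j : ℕ) < m - 1 - (i : ℕ) := this
    have hi := i.isLt
    have hj := j.isLt
    exact Fin.lt_def.mpr (by omega)
  -- choose a pattern for each attained value
  have hpat : ∀ e : ↥V, ∃ P : SqPattern A n,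
      SqGloballyAdmissible S P ∧ Ep n P = some (e : E n) := fun e => e.2
  choose pat hadm hEp using hpat
  have hQ : ∀ e : ↥V, ∃ Q : ExtPattern A n, glue (pat e) Q ∈ S ∧
      ∀ (P' : SqPattern A n) (e' : E n), Ep n P' = some e' → glue P' Q ∈ S →
        le n e' (e : E n) :=
    fun e => hmain n hn (pat e) (e : E n) (hadm e) (hEp e)
  choose Q hQ1 hQ2 using hQ
  refine ⟨fun i => pat (g i), fun i => hadm (g i), ?_⟩
  intro i hsub
  have hmem : Q (g i) ∈ ExtSet S (pat (g i)) := hQ1 (g i)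
  have := hsub hmem
  rw [Set.mem_iUnion] at this
  obtain ⟨j, hj⟩ := this
  rw [Set.mem_iUnion] at hj
  obtain ⟨hji, hmemj⟩ := hj
  have hle : le n (g j : E n) (g i : E n) :=
    hQ2 (g i) (pat (g j)) (g j : E n) (hEp (g j)) hmemj
  have hne : g j ≠ g i := by
    intro h
    apply absurd hji
    have : σ ⟨m - 1 - j, hrev j⟩ = σ ⟨m - 1 - i, hrev i⟩ := congrArg toLinearExtension h
    have h2 : (⟨m - 1 - j, hrev j⟩ : Fin m) = ⟨m - 1 - i, hrev i⟩ := σ.injective this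
    have h3 : m - 1 - (j : ℕ) = m - 1 - (i : ℕ) := congrArg Fin.val h2
    have hi := i.isLt
    have hj' := j.isLt
    have : i = j := Fin.ext (by omega)
    simp [this]
  exact absurd (hg_key i j hle hne) (by omega)
end

section
/- Let ε < 1 be a real number. For every configuration x in the density-ε shift S_ε and every integer c ≥ 1, there exists (i,j) ∈ ℤ² such that the c×c square of x with bottom-left corner (i,j) contains only white cells. Consequently, if a subshift of S_ε avoids some entirely white square pattern, then it is empty; in particular, every forbidden pattern of a nonempty subshift of S_ε must contain at least one black cell. -/
/-- The number of black cells (`true`) in the `n × n` square window of `x` with bottom-left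
corner `u`. -/
def blackCount (n : ℕ) (x : Config Bool) (u : Cell) : ℕ :=
  (Finset.univ.filter fun q : Fin n × Fin n => x (toCell q + u) = true).card

/-- The density-`ε` shift `S_ε` over `{white, black}` (= `{false, true}`): the configurations
in which, for every `n ≥ 1`, every `n × n` square subpattern contains at most `n^ε` black
cells. -/
def densityShift (ε : ℝ) : Set (Config Bool) :=
  { x | ∀ n : ℕ, 1 ≤ n → ∀ u : Cell, (blackCount n x u : ℝ) ≤ (n : ℝ) ^ ε }

/-- A real `ε` is upper-computable if some computable function `ℕ → ℚ` has range exactly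
the set of rationals greater than `ε`. -/
def UpperComputable (ε : ℝ) : Prop :=
  ∃ f : ℕ → ℚ, Computable f ∧ ∀ q : ℚ, ε < (q : ℝ) ↔ ∃ k, f k = q

/-- Let `ε < 1` be real. Every configuration of the density-`ε` shift contains, for every
`c ≥ 1`, an entirely white `c × c` square. Consequently, a subshift of `S_ε` all of whose
configurations avoid some entirely white square pattern is empty; in particular every
forbidden pattern of a nonempty subshift of `S_ε` contains at least one black cell. -/
theorem densityShift_has_white_squares (ε : ℝ) (hε : ε < 1) :
    (∀ x ∈ densityShift ε, ∀ c : ℕ, 1 ≤ c → ∃ u : Cell,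
        ∀ q : Fin c × Fin c, x (toCell q + u) = false) ∧
    (∀ S : Set (Config Bool), IsShiftSpace S → S ⊆ densityShift ε →
      ∀ c : ℕ, 1 ≤ c →
        (∀ x ∈ S, ¬ ∃ u : Cell, ∀ q : Fin c × Fin c, x (toCell q + u) = false) →
        S = ∅) ∧
    (∀ F : Set (Pattern Bool), shiftOf F ⊆ densityShift ε → (shiftOf F).Nonempty →
      ∀ P ∈ F, ∃ i : P.supp, P.val i = true) := by
  have part1 : ∀ x ∈ densityShift ε, ∀ c : ℕ, 1 ≤ c → ∃ u : Cell,
      ∀ q : Fin c × Fin c, x (toCell q + u) = false := by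
    intro x hx c hc
    by_contra hcon
    push_neg at hcon
    set k := c + 1 with hk
    set n := k * c with hn
    have hchoose : ∀ p : Fin k × Fin k, ∃ q : Fin c × Fin c,
        x (toCell q + (((p.1 : ℕ) : ℤ) * c, ((p.2 : ℕ) : ℤ) * c)) = true := by
      intro p
      obtain ⟨q, hq⟩ := hcon ((((p.1 : ℕ) : ℤ) * c, ((p.2 : ℕ) : ℤ) * c))
      exact ⟨q, by simpa using hq⟩
    choose q hq using hchoose
    have hb1 : ∀ p : Fin k × Fin k, (p.1 : ℕ) * c + ((q p).1 : ℕ) < n := by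
      intro p
      have h1 : ((p.1 : ℕ) + 1) * c ≤ k * c := mul_le_mul_left p.1.isLt c
      have h2 : ((q p).1 : ℕ) < c := (q p).1.isLt
      rw [add_mul, one_mul] at h1
      omega
    have hb2 : ∀ p : Fin k × Fin k, (p.2 : ℕ) * c + ((q p).2 : ℕ) < n := by
      intro p
      have h1 : ((p.2 : ℕ) + 1) * c ≤ k * c := mul_le_mul_left p.2.isLt c
      have h2 : ((q p).2 : ℕ) < c := (q p).2.isLt
      rw [add_mul, one_mul] at h1
      omega
    set g : Fin k × Fin k → Fin n × Fin n := fun p =>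
      (⟨(p.1 : ℕ) * c + ((q p).1 : ℕ), hb1 p⟩, ⟨(p.2 : ℕ) * c + ((q p).2 : ℕ), hb2 p⟩)
      with hg
    have hmem : ∀ p : Fin k × Fin k, g p ∈
        (Finset.univ.filter fun r : Fin n × Fin n => x (toCell r + ((0 : ℤ), (0 : ℤ))) = true) := by
      intro p
      simp only [Finset.mem_filter, Finset.mem_univ, true_and]
      have heq : toCell (g p) + ((0 : ℤ), (0 : ℤ))
          = toCell (q p) + (((p.1 : ℕ) : ℤ) * c, ((p.2 : ℕ) : ℤ) * c) := by
        simp only [toCell, hg, Prod.mk_add_mk, Prod.mk.injEq]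
        constructor <;> push_cast <;> ring
      rw [heq]
      exact hq p
    have hinj : Set.InjOn g ↑(Finset.univ : Finset (Fin k × Fin k)) := by
      intro p _ p' _ hpp
      simp only [hg, Prod.mk.injEq, Fin.mk.injEq] at hpp
      have h1 : ((q p).1 : ℕ) < c := (q p).1.isLt
      have h2 : ((q p').1 : ℕ) < c := (q p').1.isLt
      have h3 : ((q p).2 : ℕ) < c := (q p).2.isLt
      have h4 : ((q p').2 : ℕ) < c := (q p').2.isLt
      have e1 : (p.1 : ℕ) = (p'.1 : ℕ) := by
        rcases Nat.lt_trichotomy (p.1 : ℕ) (p'.1 : ℕ) with h | h | h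
        · have : ((p.1 : ℕ) + 1) * c ≤ (p'.1 : ℕ) * c := mul_le_mul_left h c
          rw [add_mul, one_mul] at this; omega
        · exact h
        · have : ((p'.1 : ℕ) + 1) * c ≤ (p.1 : ℕ) * c := mul_le_mul_left h c
          rw [add_mul, one_mul] at this; omega
      have e2 : (p.2 : ℕ) = (p'.2 : ℕ) := by
        rcases Nat.lt_trichotomy (p.2 : ℕ) (p'.2 : ℕ) with h | h | h
        · have : ((p.2 : ℕ) + 1) * c ≤ (p'.2 : ℕ) * c := mul_le_mul_left h c
          rw [add_mul, one_mul] at this; omega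
        · exact h
        · have : ((p'.2 : ℕ) + 1) * c ≤ (p.2 : ℕ) * c := mul_le_mul_left h c
          rw [add_mul, one_mul] at this; omega
      exact Prod.ext (Fin.ext e1) (Fin.ext e2)
    have hcard : k * k ≤ blackCount n x ((0 : ℤ), (0 : ℤ)) := by
      have := Finset.card_le_card_of_injOn g (fun p _ => hmem p) hinj
      simpa [blackCount, Finset.card_univ] using this
    have hn1 : 1 ≤ n := by
      have : 1 * 1 ≤ k * c := Nat.mul_le_mul (by omega) hc
      simpa using this
    have hd : (blackCount n x ((0 : ℤ), (0 : ℤ)) : ℝ) ≤ (n : ℝ) ^ ε := hx n hn1 ((0 : ℤ), (0 : ℤ))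
    have hle : (n : ℝ) ^ ε ≤ (n : ℝ) := by
      calc (n : ℝ) ^ ε ≤ (n : ℝ) ^ (1 : ℝ) :=
            Real.rpow_le_rpow_of_exponent_le (by exact_mod_cast hn1) hε.le
        _ = (n : ℝ) := Real.rpow_one _
    have hfinal : (k * k : ℝ) ≤ (n : ℝ) := by
      calc (k * k : ℝ) ≤ (blackCount n x ((0 : ℤ), (0 : ℤ)) : ℝ) := by exact_mod_cast hcard
        _ ≤ (n : ℝ) ^ ε := hd
        _ ≤ (n : ℝ) := hle
    have : k * k ≤ n := by exact_mod_cast hfinal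
    rw [hn] at this
    have hkpos : 0 < k := by omega
    have : k ≤ c := Nat.le_of_mul_le_mul_left this hkpos
    omega
  refine ⟨part1, ?_, ?_⟩
  · intro S _ hSsub c hc hav
    ext x
    simp only [Set.mem_empty_iff_false, iff_false]
    intro hxS
    exact hav x hxS (part1 x (hSsub hxS) c hc)
  · intro F hsub hne P hP
    by_contra hcon
    push_neg at hcon
    obtain ⟨x, hx⟩ := hne
    set N := P.supp.sup (fun i => max i.1.natAbs i.2.natAbs) with hN
    have hbound : ∀ i ∈ P.supp, i.1.natAbs ≤ N ∧ i.2.natAbs ≤ N := by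
      intro i hi
      have := Finset.le_sup (f := fun i : Cell => max i.1.natAbs i.2.natAbs) hi
      exact ⟨le_trans (le_max_left _ _) this, le_trans (le_max_right _ _) this⟩
    obtain ⟨u, hu⟩ := part1 x (hsub hx) (2 * N + 1) (by omega)
    apply hx P hP
    refine ⟨u + ((N : ℤ), (N : ℤ)), ?_⟩
    intro i
    obtain ⟨hb1, hb2⟩ := hbound i i.2
    have ha1 : (i : Cell).1.natAbs ≤ N := hb1
    have ha2 : (i : Cell).2.natAbs ≤ N := hb2
    have hq1 : ((i : Cell).1 + N).toNat < 2 * N + 1 := by omega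
    have hq2 : ((i : Cell).2 + N).toNat < 2 * N + 1 := by omega
    have hwhite := hu (⟨((i : Cell).1 + N).toNat, hq1⟩, ⟨((i : Cell).2 + N).toNat, hq2⟩)
    have heq : toCell ((⟨((i : Cell).1 + N).toNat, hq1⟩ : Fin (2 * N + 1)),
        (⟨((i : Cell).2 + N).toNat, hq2⟩ : Fin (2 * N + 1))) + u
        = (i : Cell) + (u + ((N : ℤ), (N : ℤ))) := by
      simp only [toCell, Prod.mk_add_mk, Prod.ext_iff]
      cases u with
      | mk u1 u2 =>
        constructor <;> simp <;> omega
    rw [heq] at hwhite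
    rw [hwhite]
    have := hcon i
    revert this
    cases P.val i <;> simp
end

section
/- For all integers N ≥ 1, ρ ≥ 1, all super-tile capacity data a, b : V → ℕ on the N×N grid V with total F, and every subset S' ⊆ V, the capacity of the s–p cut determined by S' satisfies cap(S') ≥ F; moreover the cuts determined by S' = ∅ and S' = V have capacity exactly F, so the minimum s–p cut value equals F. -/
/-- The vertices of the `N × N` grid `{0,…,N−1}²`. -/
abbrev GridV (N : ℕ) : Type := Fin N × Fin N

/-- Grid adjacency: two vertices are adjacent when they differ by exactly `1` in exactly one
coordinate. -/
def Adj {N : ℕ} (u w : GridV N) : Prop :=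
  (u.1 = w.1 ∧ ((u.2 : ℕ) + 1 = (w.2 : ℕ) ∨ (w.2 : ℕ) + 1 = (u.2 : ℕ))) ∨
  (u.2 = w.2 ∧ ((u.1 : ℕ) + 1 = (w.1 : ℕ) ∨ (w.1 : ℕ) + 1 = (u.1 : ℕ)))

instance {N : ℕ} (u w : GridV N) : Decidable (Adj u w) := by unfold Adj; infer_instance

/-- Membership in the `c × c` square subgrid with bottom-left corner `(x0, y0)`. -/
def inSquare {N : ℕ} (x0 y0 c : ℕ) (v : GridV N) : Prop :=
  x0 ≤ (v.1 : ℕ) ∧ (v.1 : ℕ) < x0 + c ∧ y0 ≤ (v.2 : ℕ) ∧ (v.2 : ℕ) < y0 + c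

instance {N : ℕ} (x0 y0 c : ℕ) (v : GridV N) : Decidable (inSquare x0 y0 c v) := by
  unfold inSquare; infer_instance

/-- Super-tile capacity data on the `N × N` grid: functions `a b : V → ℕ` with equal totals
such that the sum of `a` (resp. `b`) over every `c × c` square subgrid is at most `ρ·c`.
(This encodes the flow graph of a super-tile: a source `s` with an arc of capacity `a v` into
each grid vertex `v`, arcs of capacity `ρ` in both directions between adjacent grid vertices,
and `b v` parallel unit-capacity arcs from each grid vertex `v` to a sink `p`.) -/
structure CapacityData (N ρ : ℕ) where
  a : GridV N → ℕ
  b : GridV N → ℕ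
  total_eq : ∑ v, a v = ∑ v, b v
  a_square : ∀ c x0 y0 : ℕ, 1 ≤ c → x0 + c ≤ N → y0 + c ≤ N →
    ∑ v ∈ Finset.univ.filter (inSquare x0 y0 c), a v ≤ ρ * c
  b_square : ∀ c x0 y0 : ℕ, 1 ≤ c → x0 + c ≤ N → y0 + c ≤ N →
    ∑ v ∈ Finset.univ.filter (inSquare x0 y0 c), b v ≤ ρ * c

/-- The total value `F = Σ_v a v (= Σ_v b v)` of capacity data. -/
def CapacityData.F {N ρ : ℕ} (d : CapacityData N ρ) : ℕ := ∑ v, d.a v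

/-- The capacity of the s–p cut determined by `S' ⊆ V`:
`cap S' = Σ_{v ∉ S'} a v + Σ_{v ∈ S'} b v + ρ·#{(u,w) : u ∈ S', w ∉ S', u adjacent to w}`. -/
def cutCap {N ρ : ℕ} (d : CapacityData N ρ) (S' : Finset (GridV N)) : ℕ :=
  (∑ v ∈ S'ᶜ, d.a v) + (∑ v ∈ S', d.b v) +
    ρ * (Finset.univ.filter fun p : GridV N × GridV N =>
      p.1 ∈ S' ∧ p.2 ∉ S' ∧ Adj p.1 p.2).card


section SupAux

lemma nat_sum_biUnion_le {ι α : Type*} [DecidableEq α] (s : Finset ι) (t : ι → Finset α)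
    (f : α → ℕ) : ∑ x ∈ s.biUnion t, f x ≤ ∑ i ∈ s, ∑ x ∈ t i, f x := by
  classical
  induction s using Finset.induction_on with
  | empty => simp
  | @insert a s ha ih =>
    rw [Finset.biUnion_insert, Finset.sum_insert ha]
    refine le_trans ?_ (Nat.add_le_add_left ih _)
    have h := Finset.sum_union_inter (s₁ := t a) (s₂ := s.biUnion t) (f := f)
    omega

/-- Membership in the `w × h` rectangle with corner `(x0,y0)`. -/
def inRect {N : ℕ} (x0 y0 w h : ℕ) (v : GridV N) : Prop :=
  x0 ≤ (v.1 : ℕ) ∧ (v.1 : ℕ) < x0 + w ∧ y0 ≤ (v.2 : ℕ) ∧ (v.2 : ℕ) < y0 + h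

instance {N : ℕ} (x0 y0 w h : ℕ) (v : GridV N) : Decidable (inRect x0 y0 w h v) := by
  unfold inRect; infer_instance

/-- The square-sum hypothesis on a weight function. -/
def SqBound (N ρ : ℕ) (f : GridV N → ℕ) : Prop :=
  ∀ c x0 y0 : ℕ, 1 ≤ c → x0 + c ≤ N → y0 + c ≤ N →
    ∑ v ∈ Finset.univ.filter (inSquare x0 y0 c), f v ≤ ρ * c

lemma rect_sum_le_of_le {N ρ : ℕ} {f : GridV N → ℕ} (hf : SqBound N ρ f)
    (x0 y0 w h : ℕ) (hw : 1 ≤ w) (hwh : w ≤ h) (hx : x0 + w ≤ N) (hy : y0 + h ≤ N) :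
    ∑ v ∈ Finset.univ.filter (inRect x0 y0 w h), f v ≤ ρ * (w + h) := by
  set K := (h - 1) / w + 1 with hK
  have cover : Finset.univ.filter (inRect (N := N) x0 y0 w h) ⊆
      (Finset.range K).biUnion fun t =>
        Finset.univ.filter (inSquare x0 (y0 + min (t * w) (h - w)) w) := by
    intro v hv
    simp only [Finset.mem_filter, Finset.mem_univ, true_and, inRect] at hv
    obtain ⟨h1, h2, h3, h4⟩ := hv
    set d := (v.2 : ℕ) - y0 with hd
    have he1 : d / w * w ≤ d := Nat.div_mul_le_self _ _
    have he2 : d < d / w * w + w := Nat.lt_div_mul_add (by omega)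
    refine Finset.mem_biUnion.2 ⟨d / w, Finset.mem_range.2 ?_, ?_⟩
    · have hdd : d / w ≤ (h - 1) / w := Nat.div_le_div_right (by omega)
      omega
    · simp only [Finset.mem_filter, Finset.mem_univ, true_and, inSquare]
      refine ⟨h1, h2, ?_, ?_⟩
      · rcases Nat.le_total (d / w * w) (h - w) with hc | hc
        · rw [min_eq_left hc]; omega
        · rw [min_eq_right hc]; omega
      · rcases Nat.le_total (d / w * w) (h - w) with hc | hc
        · rw [min_eq_left hc]; omega
        · rw [min_eq_right hc]; omega
  calc ∑ v ∈ Finset.univ.filter (inRect (N := N) x0 y0 w h), f v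
      ≤ ∑ v ∈ (Finset.range K).biUnion (fun t =>
          Finset.univ.filter (inSquare x0 (y0 + min (t * w) (h - w)) w)), f v :=
        Finset.sum_le_sum_of_subset cover
    _ ≤ ∑ t ∈ Finset.range K, ∑ v ∈ Finset.univ.filter
          (inSquare x0 (y0 + min (t * w) (h - w)) w), f v := nat_sum_biUnion_le _ _ _
    _ ≤ ∑ _t ∈ Finset.range K, ρ * w := by
        refine Finset.sum_le_sum fun t _ => hf w x0 _ hw hx ?_
        have := min_le_right (t * w) (h - w)
        omega
    _ = K * (ρ * w) := by rw [Finset.sum_const, smul_eq_mul, Finset.card_range]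
    _ ≤ ρ * (w + h) := by
        have h1 : (h - 1) / w * w ≤ h - 1 := Nat.div_mul_le_self _ _
        have h2 : K * w ≤ w + h := by rw [hK, add_mul, one_mul]; omega
        calc K * (ρ * w) = ρ * (K * w) := by ring
          _ ≤ ρ * (w + h) := Nat.mul_le_mul_left _ h2

lemma rect_sum_le' {N ρ : ℕ} {f : GridV N → ℕ} (hf : SqBound N ρ f)
    (x0 y0 w h : ℕ) (hh : 1 ≤ h) (hwh : h ≤ w) (hx : x0 + w ≤ N) (hy : y0 + h ≤ N) :
    ∑ v ∈ Finset.univ.filter (inRect x0 y0 w h), f v ≤ ρ * (w + h) := by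
  set K := (w - 1) / h + 1 with hK
  have cover : Finset.univ.filter (inRect (N := N) x0 y0 w h) ⊆
      (Finset.range K).biUnion fun t =>
        Finset.univ.filter (inSquare (x0 + min (t * h) (w - h)) y0 h) := by
    intro v hv
    simp only [Finset.mem_filter, Finset.mem_univ, true_and, inRect] at hv
    obtain ⟨h1, h2, h3, h4⟩ := hv
    set d := (v.1 : ℕ) - x0 with hd
    have he1 : d / h * h ≤ d := Nat.div_mul_le_self _ _
    have he2 : d < d / h * h + h := Nat.lt_div_mul_add (by omega)
    refine Finset.mem_biUnion.2 ⟨d / h, Finset.mem_range.2 ?_, ?_⟩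
    · have hdd : d / h ≤ (w - 1) / h := Nat.div_le_div_right (by omega)
      omega
    · simp only [Finset.mem_filter, Finset.mem_univ, true_and, inSquare]
      refine ⟨?_, ?_, h3, h4⟩
      · rcases Nat.le_total (d / h * h) (w - h) with hc | hc
        · rw [min_eq_left hc]; omega
        · rw [min_eq_right hc]; omega
      · rcases Nat.le_total (d / h * h) (w - h) with hc | hc
        · rw [min_eq_left hc]; omega
        · rw [min_eq_right hc]; omega
  calc ∑ v ∈ Finset.univ.filter (inRect (N := N) x0 y0 w h), f v
      ≤ ∑ v ∈ (Finset.range K).biUnion (fun t =>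
          Finset.univ.filter (inSquare (x0 + min (t * h) (w - h)) y0 h)), f v :=
        Finset.sum_le_sum_of_subset cover
    _ ≤ ∑ t ∈ Finset.range K, ∑ v ∈ Finset.univ.filter
          (inSquare (x0 + min (t * h) (w - h)) y0 h), f v := nat_sum_biUnion_le _ _ _
    _ ≤ ∑ _t ∈ Finset.range K, ρ * h := by
        refine Finset.sum_le_sum fun t _ => hf h _ y0 hh ?_ hy
        have := min_le_right (t * h) (w - h)
        omega
    _ = K * (ρ * h) := by rw [Finset.sum_const, smul_eq_mul, Finset.card_range]
    _ ≤ ρ * (w + h) := by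
        have h1 : (w - 1) / h * h ≤ w - 1 := Nat.div_mul_le_self _ _
        have h2 : K * h ≤ w + h := by rw [hK, add_mul, one_mul]; omega
        calc K * (ρ * h) = ρ * (K * h) := by ring
          _ ≤ ρ * (w + h) := Nat.mul_le_mul_left _ h2

lemma rect_sum_le {N ρ : ℕ} {f : GridV N → ℕ} (hf : SqBound N ρ f)
    (x0 y0 w h : ℕ) (hw : 1 ≤ w) (hh : 1 ≤ h) (hx : x0 + w ≤ N) (hy : y0 + h ≤ N) :
    ∑ v ∈ Finset.univ.filter (inRect x0 y0 w h), f v ≤ ρ * (w + h) := by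
  rcases Nat.le_total w h with hc | hc
  · exact rect_sum_le_of_le hf x0 y0 w h hw hc hx hy
  · exact rect_sum_le' hf x0 y0 w h hh hc hx hy

end SupAux

section SupAux2

/-- Starts of horizontal runs (no left neighbour in `T`, first coordinate direction). -/
def HS {N : ℕ} (T : Finset (GridV N)) : Finset (GridV N) :=
  T.filter fun v => ¬ ∃ u ∈ T, u.2 = v.2 ∧ (u.1 : ℕ) + 1 = (v.1 : ℕ)

/-- Starts of vertical runs (no lower neighbour in `T`, second coordinate direction). -/
def VS {N : ℕ} (T : Finset (GridV N)) : Finset (GridV N) :=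
  T.filter fun v => ¬ ∃ u ∈ T, u.1 = v.1 ∧ (u.2 : ℕ) + 1 = (v.2 : ℕ)

lemma sum_le_starts {N ρ : ℕ} {f : GridV N → ℕ} (hf : SqBound N ρ f) :
    ∀ (n : ℕ) (T : Finset (GridV N)), T.card ≤ n →
      ∑ v ∈ T, f v ≤ ρ * ((HS T).card + (VS T).card) := by
  intro n
  induction n with
  | zero =>
    intro T hT
    have : T = ∅ := Finset.card_eq_zero.1 (Nat.le_zero.1 hT)
    simp [this]
  | succ n ih =>
    intro T hT
    rcases T.eq_empty_or_nonempty with rfl | hne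
    · simp
    set xs := T.image (fun v : GridV N => (v.1 : ℕ)) with hxs
    set ys := T.image (fun v : GridV N => (v.2 : ℕ)) with hys
    have hxs_ne : xs.Nonempty := hne.image _
    have hys_ne : ys.Nonempty := hne.image _
    set xmin := xs.min' hxs_ne
    set xmax := xs.max' hxs_ne
    set ymin := ys.min' hys_ne
    set ymax := ys.max' hys_ne
    by_cases hsplitx : ∃ x : ℕ, xmin < x ∧ x < xmax ∧ x ∉ xs
    · -- split at empty column x
      obtain ⟨x, hx1, hx2, hx3⟩ := hsplitx
      set T1 := T.filter (fun v : GridV N => (v.1 : ℕ) < x) with hT1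
      set T2 := T.filter (fun v : GridV N => x < (v.1 : ℕ)) with hT2
      have hmemx : ∀ v ∈ T, (v.1 : ℕ) ≠ x := by
        intro v hv hvx
        exact hx3 (Finset.mem_image.2 ⟨v, hv, hvx⟩)
      have hunion : T = T1 ∪ T2 := by
        ext v
        simp only [hT1, hT2, Finset.mem_union, Finset.mem_filter]
        constructor
        · intro hv
          have := hmemx v hv
          rcases Nat.lt_or_ge (v.1 : ℕ) x with h | h
          · exact Or.inl ⟨hv, h⟩
          · exact Or.inr ⟨hv, by omega⟩
        · rintro (⟨hv, _⟩ | ⟨hv, _⟩) <;> exact hv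
      have hdisj : Disjoint T1 T2 := by
        rw [Finset.disjoint_left]
        intro v hv1 hv2
        simp only [hT1, hT2, Finset.mem_filter] at hv1 hv2
        omega
      have hcards : T1.card + T2.card = T.card := by
        rw [hunion, Finset.card_union_of_disjoint hdisj]
      have hT1ne : T1.Nonempty := by
        obtain ⟨v, hv, hvx⟩ := Finset.mem_image.1 (xs.min'_mem hxs_ne)
        exact ⟨v, Finset.mem_filter.2 ⟨hv, by omega⟩⟩
      have hT2ne : T2.Nonempty := by
        obtain ⟨v, hv, hvx⟩ := Finset.mem_image.1 (xs.max'_mem hxs_ne)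
        exact ⟨v, Finset.mem_filter.2 ⟨hv, by omega⟩⟩
      have hc1 : T1.card ≤ n := by
        have := Finset.card_pos.2 hT2ne; omega
      have hc2 : T2.card ≤ n := by
        have := Finset.card_pos.2 hT1ne; omega
      -- starts of parts are starts of T
      have hsub : ∀ (W : Finset (GridV N)), W = T1 ∨ W = T2 → HS W ⊆ HS T ∧ VS W ⊆ VS T := by
        intro W hW
        constructor
        · intro v hv
          simp only [HS, Finset.mem_filter] at hv ⊢
          obtain ⟨hvW, hnol⟩ := hv
          have hvT : v ∈ T := by
            rcases hW with rfl | rfl <;> exact (Finset.mem_filter.1 hvW).1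
          refine ⟨hvT, ?_⟩
          rintro ⟨u, huT, hu2, hu1⟩
          have hux := hmemx u huT
          rcases hW with rfl | rfl
          · have hvx : (v.1 : ℕ) < x := (Finset.mem_filter.1 hvW).2
            exact hnol ⟨u, Finset.mem_filter.2 ⟨huT, by omega⟩, hu2, hu1⟩
          · have hvx : x < (v.1 : ℕ) := (Finset.mem_filter.1 hvW).2
            exact hnol ⟨u, Finset.mem_filter.2 ⟨huT, by omega⟩, hu2, hu1⟩
        · intro v hv
          simp only [VS, Finset.mem_filter] at hv ⊢
          obtain ⟨hvW, hnol⟩ := hv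
          have hvT : v ∈ T := by
            rcases hW with rfl | rfl <;> exact (Finset.mem_filter.1 hvW).1
          refine ⟨hvT, ?_⟩
          rintro ⟨u, huT, hu1, hu2⟩
          rcases hW with rfl | rfl
          · have hvx : (v.1 : ℕ) < x := (Finset.mem_filter.1 hvW).2
            exact hnol ⟨u, Finset.mem_filter.2 ⟨huT, by omega⟩, hu1, hu2⟩
          · have hvx : x < (v.1 : ℕ) := (Finset.mem_filter.1 hvW).2
            exact hnol ⟨u, Finset.mem_filter.2 ⟨huT, by omega⟩, hu1, hu2⟩
      obtain ⟨hHS1, hVS1⟩ := hsub T1 (Or.inl rfl)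
      obtain ⟨hHS2, hVS2⟩ := hsub T2 (Or.inr rfl)
      have hHdisj : Disjoint (HS T1) (HS T2) :=
        hdisj.mono (Finset.filter_subset _ _) (Finset.filter_subset _ _)
      have hVdisj : Disjoint (VS T1) (VS T2) :=
        hdisj.mono (Finset.filter_subset _ _) (Finset.filter_subset _ _)
      have hHcard : (HS T1).card + (HS T2).card ≤ (HS T).card := by
        rw [← Finset.card_union_of_disjoint hHdisj]
        exact Finset.card_le_card (Finset.union_subset hHS1 hHS2)
      have hVcard : (VS T1).card + (VS T2).card ≤ (VS T).card := by
        rw [← Finset.card_union_of_disjoint hVdisj]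
        exact Finset.card_le_card (Finset.union_subset hVS1 hVS2)
      have e1 := ih T1 hc1
      have e2 := ih T2 hc2
      have hsum : ∑ v ∈ T, f v = ∑ v ∈ T1, f v + ∑ v ∈ T2, f v := by
        rw [hunion, Finset.sum_union hdisj]
      rw [hsum]
      calc ∑ v ∈ T1, f v + ∑ v ∈ T2, f v
          ≤ ρ * ((HS T1).card + (VS T1).card) + ρ * ((HS T2).card + (VS T2).card) :=
            Nat.add_le_add e1 e2
        _ ≤ ρ * ((HS T).card + (VS T).card) := by
            rw [← Nat.mul_add]
            exact Nat.mul_le_mul_left _ (by omega)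
    · by_cases hsplity : ∃ y : ℕ, ymin < y ∧ y < ymax ∧ y ∉ ys
      · -- split at empty row y
        obtain ⟨y, hy1, hy2, hy3⟩ := hsplity
        set T1 := T.filter (fun v : GridV N => (v.2 : ℕ) < y) with hT1
        set T2 := T.filter (fun v : GridV N => y < (v.2 : ℕ)) with hT2
        have hmemy : ∀ v ∈ T, (v.2 : ℕ) ≠ y := by
          intro v hv hvy
          exact hy3 (Finset.mem_image.2 ⟨v, hv, hvy⟩)
        have hunion : T = T1 ∪ T2 := by
          ext v
          simp only [hT1, hT2, Finset.mem_union, Finset.mem_filter]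
          constructor
          · intro hv
            have := hmemy v hv
            rcases Nat.lt_or_ge (v.2 : ℕ) y with h | h
            · exact Or.inl ⟨hv, h⟩
            · exact Or.inr ⟨hv, by omega⟩
          · rintro (⟨hv, _⟩ | ⟨hv, _⟩) <;> exact hv
        have hdisj : Disjoint T1 T2 := by
          rw [Finset.disjoint_left]
          intro v hv1 hv2
          simp only [hT1, hT2, Finset.mem_filter] at hv1 hv2
          omega
        have hcards : T1.card + T2.card = T.card := by
          rw [hunion, Finset.card_union_of_disjoint hdisj]
        have hT1ne : T1.Nonempty := by
          obtain ⟨v, hv, hvy⟩ := Finset.mem_image.1 (ys.min'_mem hys_ne)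
          exact ⟨v, Finset.mem_filter.2 ⟨hv, by omega⟩⟩
        have hT2ne : T2.Nonempty := by
          obtain ⟨v, hv, hvy⟩ := Finset.mem_image.1 (ys.max'_mem hys_ne)
          exact ⟨v, Finset.mem_filter.2 ⟨hv, by omega⟩⟩
        have hc1 : T1.card ≤ n := by
          have := Finset.card_pos.2 hT2ne; omega
        have hc2 : T2.card ≤ n := by
          have := Finset.card_pos.2 hT1ne; omega
        have hsub : ∀ (W : Finset (GridV N)), W = T1 ∨ W = T2 → HS W ⊆ HS T ∧ VS W ⊆ VS T := by
          intro W hW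
          constructor
          · intro v hv
            simp only [HS, Finset.mem_filter] at hv ⊢
            obtain ⟨hvW, hnol⟩ := hv
            have hvT : v ∈ T := by
              rcases hW with rfl | rfl <;> exact (Finset.mem_filter.1 hvW).1
            refine ⟨hvT, ?_⟩
            rintro ⟨u, huT, hu2, hu1⟩
            rcases hW with rfl | rfl
            · have hvy : (v.2 : ℕ) < y := (Finset.mem_filter.1 hvW).2
              have : (u.2 : ℕ) = (v.2 : ℕ) := by rw [hu2]
              exact hnol ⟨u, Finset.mem_filter.2 ⟨huT, by omega⟩, hu2, hu1⟩
            · have hvy : y < (v.2 : ℕ) := (Finset.mem_filter.1 hvW).2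
              have : (u.2 : ℕ) = (v.2 : ℕ) := by rw [hu2]
              exact hnol ⟨u, Finset.mem_filter.2 ⟨huT, by omega⟩, hu2, hu1⟩
          · intro v hv
            simp only [VS, Finset.mem_filter] at hv ⊢
            obtain ⟨hvW, hnol⟩ := hv
            have hvT : v ∈ T := by
              rcases hW with rfl | rfl <;> exact (Finset.mem_filter.1 hvW).1
            refine ⟨hvT, ?_⟩
            rintro ⟨u, huT, hu1, hu2⟩
            have huy := hmemy u huT
            rcases hW with rfl | rfl
            · have hvy : (v.2 : ℕ) < y := (Finset.mem_filter.1 hvW).2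
              exact hnol ⟨u, Finset.mem_filter.2 ⟨huT, by omega⟩, hu1, hu2⟩
            · have hvy : y < (v.2 : ℕ) := (Finset.mem_filter.1 hvW).2
              exact hnol ⟨u, Finset.mem_filter.2 ⟨huT, by omega⟩, hu1, hu2⟩
        obtain ⟨hHS1, hVS1⟩ := hsub T1 (Or.inl rfl)
        obtain ⟨hHS2, hVS2⟩ := hsub T2 (Or.inr rfl)
        have hHdisj : Disjoint (HS T1) (HS T2) :=
          hdisj.mono (Finset.filter_subset _ _) (Finset.filter_subset _ _)
        have hVdisj : Disjoint (VS T1) (VS T2) :=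
          hdisj.mono (Finset.filter_subset _ _) (Finset.filter_subset _ _)
        have hHcard : (HS T1).card + (HS T2).card ≤ (HS T).card := by
          rw [← Finset.card_union_of_disjoint hHdisj]
          exact Finset.card_le_card (Finset.union_subset hHS1 hHS2)
        have hVcard : (VS T1).card + (VS T2).card ≤ (VS T).card := by
          rw [← Finset.card_union_of_disjoint hVdisj]
          exact Finset.card_le_card (Finset.union_subset hVS1 hVS2)
        have e1 := ih T1 hc1
        have e2 := ih T2 hc2
        have hsum : ∑ v ∈ T, f v = ∑ v ∈ T1, f v + ∑ v ∈ T2, f v := by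
          rw [hunion, Finset.sum_union hdisj]
        rw [hsum]
        calc ∑ v ∈ T1, f v + ∑ v ∈ T2, f v
            ≤ ρ * ((HS T1).card + (VS T1).card) + ρ * ((HS T2).card + (VS T2).card) :=
              Nat.add_le_add e1 e2
          _ ≤ ρ * ((HS T).card + (VS T).card) := by
              rw [← Nat.mul_add]
              exact Nat.mul_le_mul_left _ (by omega)
      · -- base case: every line of the bounding box is met
        push_neg at hsplitx hsplity
        set W := xmax + 1 - xmin with hW
        set H := ymax + 1 - ymin with hH
        have hxminmax : xmin ≤ xmax := Finset.min'_le xs xmax (xs.max'_mem hxs_ne)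
        have hyminmax : ymin ≤ ymax := Finset.min'_le ys ymax (ys.max'_mem hys_ne)
        have hxmaxN : xmax < N := by
          obtain ⟨v, hv, hvx⟩ := Finset.mem_image.1 (xs.max'_mem hxs_ne)
          show xs.max' hxs_ne < N
          rw [← hvx]; exact v.1.isLt
        have hymaxN : ymax < N := by
          obtain ⟨v, hv, hvy⟩ := Finset.mem_image.1 (ys.max'_mem hys_ne)
          show ys.max' hys_ne < N
          rw [← hvy]; exact v.2.isLt
        have hxall : ∀ x : ℕ, xmin ≤ x → x ≤ xmax → x ∈ xs := by
          intro x h1 h2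
          rcases eq_or_lt_of_le h1 with rfl | h1
          · exact xs.min'_mem hxs_ne
          rcases eq_or_lt_of_le h2 with rfl | h2
          · exact xs.max'_mem hxs_ne
          exact hsplitx x h1 h2
        have hyall : ∀ y : ℕ, ymin ≤ y → y ≤ ymax → y ∈ ys := by
          intro y h1 h2
          rcases eq_or_lt_of_le h1 with rfl | h1
          · exact ys.min'_mem hys_ne
          rcases eq_or_lt_of_le h2 with rfl | h2
          · exact ys.max'_mem hys_ne
          exact hsplity y h1 h2
        -- each met row contributes a horizontal start
        have hHcard : H ≤ (HS T).card := by
          have hsub : Finset.Icc ymin ymax ⊆ (HS T).image (fun v : GridV N => (v.2 : ℕ)) := by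
            intro y hy
            rw [Finset.mem_Icc] at hy
            obtain ⟨v0, hv0, hv0y⟩ := Finset.mem_image.1 (hyall y hy.1 hy.2)
            have hBne : (T.filter (fun v : GridV N => (v.2 : ℕ) = y)).Nonempty :=
              ⟨v0, Finset.mem_filter.2 ⟨hv0, hv0y⟩⟩
            obtain ⟨v, hvB, hvmin⟩ := Finset.exists_min_image _ (fun v : GridV N => (v.1 : ℕ)) hBne
            obtain ⟨hvT, hvy⟩ := Finset.mem_filter.1 hvB
            have hvHS : v ∈ HS T := by
              simp only [HS, Finset.mem_filter]
              refine ⟨hvT, ?_⟩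
              rintro ⟨u, huT, hu2, hu1⟩
              have huB : u ∈ T.filter (fun v : GridV N => (v.2 : ℕ) = y) :=
                Finset.mem_filter.2 ⟨huT, by rw [hu2]; exact hvy⟩
              have := hvmin u huB
              omega
            exact Finset.mem_image.2 ⟨v, hvHS, hvy⟩
          calc H = (Finset.Icc ymin ymax).card := by rw [Nat.card_Icc]
            _ ≤ ((HS T).image (fun v : GridV N => (v.2 : ℕ))).card := Finset.card_le_card hsub
            _ ≤ (HS T).card := Finset.card_image_le
        have hVcard : W ≤ (VS T).card := by
          have hsub : Finset.Icc xmin xmax ⊆ (VS T).image (fun v : GridV N => (v.1 : ℕ)) := by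
            intro x hx
            rw [Finset.mem_Icc] at hx
            obtain ⟨v0, hv0, hv0x⟩ := Finset.mem_image.1 (hxall x hx.1 hx.2)
            have hBne : (T.filter (fun v : GridV N => (v.1 : ℕ) = x)).Nonempty :=
              ⟨v0, Finset.mem_filter.2 ⟨hv0, hv0x⟩⟩
            obtain ⟨v, hvB, hvmin⟩ := Finset.exists_min_image _ (fun v : GridV N => (v.2 : ℕ)) hBne
            obtain ⟨hvT, hvx⟩ := Finset.mem_filter.1 hvB
            have hvVS : v ∈ VS T := by
              simp only [VS, Finset.mem_filter]
              refine ⟨hvT, ?_⟩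
              rintro ⟨u, huT, hu1, hu2⟩
              have huB : u ∈ T.filter (fun v : GridV N => (v.1 : ℕ) = x) :=
                Finset.mem_filter.2 ⟨huT, by rw [hu1]; exact hvx⟩
              have := hvmin u huB
              omega
            exact Finset.mem_image.2 ⟨v, hvVS, hvx⟩
          calc W = (Finset.Icc xmin xmax).card := by rw [Nat.card_Icc]
            _ ≤ ((VS T).image (fun v : GridV N => (v.1 : ℕ))).card := Finset.card_le_card hsub
            _ ≤ (VS T).card := Finset.card_image_le
        have hTsub : T ⊆ Finset.univ.filter (inRect xmin ymin W H) := by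
          intro v hv
          have h1 : xmin ≤ (v.1 : ℕ) := Finset.min'_le xs _ (Finset.mem_image.2 ⟨v, hv, rfl⟩)
          have h2 : (v.1 : ℕ) ≤ xmax := Finset.le_max' xs _ (Finset.mem_image.2 ⟨v, hv, rfl⟩)
          have h3 : ymin ≤ (v.2 : ℕ) := Finset.min'_le ys _ (Finset.mem_image.2 ⟨v, hv, rfl⟩)
          have h4 : (v.2 : ℕ) ≤ ymax := Finset.le_max' ys _ (Finset.mem_image.2 ⟨v, hv, rfl⟩)
          simp only [Finset.mem_filter, Finset.mem_univ, true_and, inRect]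
          omega
        calc ∑ v ∈ T, f v ≤ ∑ v ∈ Finset.univ.filter (inRect xmin ymin W H), f v :=
              Finset.sum_le_sum_of_subset hTsub
          _ ≤ ρ * (W + H) := rect_sum_le hf xmin ymin W H (by omega) (by omega)
              (by omega) (by omega)
          _ ≤ ρ * ((HS T).card + (VS T).card) := Nat.mul_le_mul_left _ (by omega)

end SupAux2

section SupAux3

/-- The set of boundary pairs of the cut determined by `T`. -/
def bdry {N : ℕ} (T : Finset (GridV N)) : Finset (GridV N × GridV N) :=
  Finset.univ.filter fun p : GridV N × GridV N => p.1 ∈ T ∧ p.2 ∉ T ∧ Adj p.1 p.2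

lemma adj_symm {N : ℕ} {u w : GridV N} (h : Adj u w) : Adj w u := by
  unfold Adj at h ⊢
  tauto

lemma bdry_compl_card {N : ℕ} (T : Finset (GridV N)) : (bdry Tᶜ).card = (bdry T).card := by
  apply Finset.card_bij (fun p _ => Prod.swap p)
  · rintro ⟨u, w⟩ hp
    simp only [bdry, Finset.mem_filter, Finset.mem_univ, true_and, Finset.mem_compl,
      not_not] at hp ⊢
    exact ⟨hp.2.1, hp.1, adj_symm hp.2.2⟩
  · rintro ⟨u, w⟩ _ ⟨u', w'⟩ _ h
    simp only [Prod.swap, Prod.ext_iff, Prod.mk.injEq] at h ⊢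
    tauto
  · rintro ⟨u, w⟩ hp
    refine ⟨(w, u), ?_, rfl⟩
    simp only [bdry, Finset.mem_filter, Finset.mem_univ, true_and, Finset.mem_compl,
      not_not] at hp ⊢
    exact ⟨hp.2.1, hp.1, adj_symm hp.2.2⟩

/-- The map sending a horizontal run start to a boundary edge. -/
def phiH {N : ℕ} (T : Finset (GridV N)) (v : GridV N) : GridV N × GridV N :=
  if h : 0 < (v.1 : ℕ) then
    (v, (⟨(v.1 : ℕ) - 1, Nat.lt_of_le_of_lt (Nat.sub_le _ _) v.1.isLt⟩, v.2))
  else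
    if hA : (Finset.univ.filter (fun x : Fin N => (x, v.2) ∉ T)).Nonempty then
      let m := Finset.min' _ hA
      ((⟨(m : ℕ) - 1, Nat.lt_of_le_of_lt (Nat.sub_le _ _) m.isLt⟩, v.2), (m, v.2))
    else (v, v)

/-- The map sending a vertical run start to a boundary edge. -/
def phiV {N : ℕ} (T : Finset (GridV N)) (v : GridV N) : GridV N × GridV N :=
  if h : 0 < (v.2 : ℕ) then
    (v, (v.1, ⟨(v.2 : ℕ) - 1, Nat.lt_of_le_of_lt (Nat.sub_le _ _) v.2.isLt⟩))
  else
    if hA : (Finset.univ.filter (fun y : Fin N => (v.1, y) ∉ T)).Nonempty then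
      let m := Finset.min' _ hA
      ((v.1, ⟨(m : ℕ) - 1, Nat.lt_of_le_of_lt (Nat.sub_le _ _) m.isLt⟩), (v.1, m))
    else (v, v)

lemma phiH_spec {N : ℕ} {T : Finset (GridV N)}
    (hrow : ∀ y : Fin N, ∃ x : Fin N, (x, y) ∉ T) {v : GridV N} (hv : v ∈ HS T) :
    phiH T v ∈ bdry T ∧ (phiH T v).1.2 = (phiH T v).2.2 ∧ (phiH T v).2.2 = v.2 ∧
      ((0 < (v.1 : ℕ) ∧ (phiH T v).1 = v ∧ ((phiH T v).2.1 : ℕ) + 1 = ((phiH T v).1.1 : ℕ)) ∨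
       ((v.1 : ℕ) = 0 ∧ ((phiH T v).1.1 : ℕ) + 1 = ((phiH T v).2.1 : ℕ))) := by
  simp only [HS, Finset.mem_filter] at hv
  obtain ⟨hvT, hnol⟩ := hv
  by_cases h : 0 < (v.1 : ℕ)
  · have hleft : ((⟨(v.1 : ℕ) - 1, Nat.lt_of_le_of_lt (Nat.sub_le _ _) v.1.isLt⟩ : Fin N), v.2) ∉ T := by
      intro hmem
      exact hnol ⟨_, hmem, rfl, by simp; omega⟩
    rw [phiH, dif_pos h]
    refine ⟨?_, rfl, rfl, Or.inl ⟨h, rfl, by simp; omega⟩⟩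
    simp only [bdry, Finset.mem_filter, Finset.mem_univ, true_and]
    refine ⟨hvT, hleft, Or.inr ⟨rfl, Or.inr ?_⟩⟩
    simp; omega
  · obtain ⟨x0, hx0⟩ := hrow v.2
    have hA : (Finset.univ.filter (fun x : Fin N => (x, v.2) ∉ T)).Nonempty :=
      ⟨x0, Finset.mem_filter.2 ⟨Finset.mem_univ _, hx0⟩⟩
    rw [phiH, dif_neg h, dif_pos hA]
    set m := Finset.min' _ hA with hm
    have hmT : (m, v.2) ∉ T := (Finset.mem_filter.1 (Finset.min'_mem _ hA)).2
    have hmpos : 0 < (m : ℕ) := by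
      by_contra hm0
      apply hmT
      have : m = v.1 := by
        apply Fin.ext; omega
      rw [this]
      exact hvT
    have hprev : ((⟨(m : ℕ) - 1, Nat.lt_of_le_of_lt (Nat.sub_le _ _) m.isLt⟩ : Fin N), v.2) ∈ T := by
      by_contra hprev
      have hmem : (⟨(m : ℕ) - 1, Nat.lt_of_le_of_lt (Nat.sub_le _ _) m.isLt⟩ : Fin N) ∈
          Finset.univ.filter (fun x : Fin N => (x, v.2) ∉ T) :=
        Finset.mem_filter.2 ⟨Finset.mem_univ _, hprev⟩
      have := Finset.min'_le _ _ hmem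
      rw [← hm] at this
      have : (m : ℕ) ≤ (m : ℕ) - 1 := this
      omega
    refine ⟨?_, rfl, rfl, Or.inr ⟨by omega, by simp; omega⟩⟩
    simp only [bdry, Finset.mem_filter, Finset.mem_univ, true_and]
    exact ⟨hprev, hmT, Or.inr ⟨rfl, Or.inl (by simp; omega)⟩⟩

end SupAux3

section SupAux4

lemma phiV_spec {N : ℕ} {T : Finset (GridV N)}
    (hcol : ∀ x : Fin N, ∃ y : Fin N, (x, y) ∉ T) {v : GridV N} (hv : v ∈ VS T) :
    phiV T v ∈ bdry T ∧ (phiV T v).1.1 = (phiV T v).2.1 ∧ (phiV T v).2.1 = v.1 ∧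
      ((0 < (v.2 : ℕ) ∧ (phiV T v).1 = v ∧ ((phiV T v).2.2 : ℕ) + 1 = ((phiV T v).1.2 : ℕ)) ∨
       ((v.2 : ℕ) = 0 ∧ ((phiV T v).1.2 : ℕ) + 1 = ((phiV T v).2.2 : ℕ))) := by
  simp only [VS, Finset.mem_filter] at hv
  obtain ⟨hvT, hnol⟩ := hv
  by_cases h : 0 < (v.2 : ℕ)
  · have hleft : (v.1, (⟨(v.2 : ℕ) - 1, Nat.lt_of_le_of_lt (Nat.sub_le _ _) v.2.isLt⟩ : Fin N)) ∉ T := by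
      intro hmem
      exact hnol ⟨_, hmem, rfl, by simp; omega⟩
    rw [phiV, dif_pos h]
    refine ⟨?_, rfl, rfl, Or.inl ⟨h, rfl, by simp; omega⟩⟩
    simp only [bdry, Finset.mem_filter, Finset.mem_univ, true_and]
    refine ⟨hvT, hleft, Or.inl ⟨rfl, Or.inr ?_⟩⟩
    simp; omega
  · obtain ⟨y0, hy0⟩ := hcol v.1
    have hA : (Finset.univ.filter (fun y : Fin N => (v.1, y) ∉ T)).Nonempty :=
      ⟨y0, Finset.mem_filter.2 ⟨Finset.mem_univ _, hy0⟩⟩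
    rw [phiV, dif_neg h, dif_pos hA]
    set m := Finset.min' _ hA with hm
    have hmT : (v.1, m) ∉ T := (Finset.mem_filter.1 (Finset.min'_mem _ hA)).2
    have hmpos : 0 < (m : ℕ) := by
      by_contra hm0
      apply hmT
      have : m = v.2 := by
        apply Fin.ext; omega
      rw [this]
      exact hvT
    have hprev : (v.1, (⟨(m : ℕ) - 1, Nat.lt_of_le_of_lt (Nat.sub_le _ _) m.isLt⟩ : Fin N)) ∈ T := by
      by_contra hprev
      have hmem : (⟨(m : ℕ) - 1, Nat.lt_of_le_of_lt (Nat.sub_le _ _) m.isLt⟩ : Fin N) ∈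
          Finset.univ.filter (fun y : Fin N => (v.1, y) ∉ T) :=
        Finset.mem_filter.2 ⟨Finset.mem_univ _, hprev⟩
      have := Finset.min'_le _ _ hmem
      rw [← hm] at this
      have : (m : ℕ) ≤ (m : ℕ) - 1 := this
      omega
    refine ⟨?_, rfl, rfl, Or.inr ⟨by omega, by simp; omega⟩⟩
    simp only [bdry, Finset.mem_filter, Finset.mem_univ, true_and]
    exact ⟨hprev, hmT, Or.inl ⟨rfl, Or.inl (by simp; omega)⟩⟩

lemma starts_le_bdry {N : ℕ} (T : Finset (GridV N))
    (hrow : ∀ y : Fin N, ∃ x : Fin N, (x, y) ∉ T)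
    (hcol : ∀ x : Fin N, ∃ y : Fin N, (x, y) ∉ T) :
    (HS T).card + (VS T).card ≤ (bdry T).card := by
  classical
  set BH := (bdry T).filter (fun p : GridV N × GridV N => p.1.2 = p.2.2) with hBH
  set BV := (bdry T).filter (fun p : GridV N × GridV N => p.1.1 = p.2.1) with hBV
  have hH : (HS T).card ≤ BH.card := by
    apply Finset.card_le_card_of_injOn (phiH T)
    · intro v hv
      obtain ⟨h1, h2, _, _⟩ := phiH_spec hrow hv
      exact Finset.mem_filter.2 ⟨h1, h2⟩
    · intro v hv v' hv' heq
      obtain ⟨_, _, h3, h4⟩ := phiH_spec hrow hv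
      obtain ⟨_, _, h3', h4'⟩ := phiH_spec hrow hv'
      rw [heq] at h3 h4
      rcases h4 with ⟨hp, he, ha⟩ | ⟨hz, ha⟩ <;> rcases h4' with ⟨hp', he', ha'⟩ | ⟨hz', ha'⟩
      · exact he.symm.trans he'
      · omega
      · omega
      · have : v.2 = v'.2 := by rw [← h3, ← h3']
        have h1 : v.1 = v'.1 := by apply Fin.ext; omega
        exact Prod.ext h1 this
  have hV : (VS T).card ≤ BV.card := by
    apply Finset.card_le_card_of_injOn (phiV T)
    · intro v hv
      obtain ⟨h1, h2, _, _⟩ := phiV_spec hcol hv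
      exact Finset.mem_filter.2 ⟨h1, h2⟩
    · intro v hv v' hv' heq
      obtain ⟨_, _, h3, h4⟩ := phiV_spec hcol hv
      obtain ⟨_, _, h3', h4'⟩ := phiV_spec hcol hv'
      rw [heq] at h3 h4
      rcases h4 with ⟨hp, he, ha⟩ | ⟨hz, ha⟩ <;> rcases h4' with ⟨hp', he', ha'⟩ | ⟨hz', ha'⟩
      · exact he.symm.trans he'
      · omega
      · omega
      · have : v.1 = v'.1 := by rw [← h3, ← h3']
        have h2 : v.2 = v'.2 := by apply Fin.ext; omega
        exact Prod.ext this h2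
  have hdisj : Disjoint BH BV := by
    rw [Finset.disjoint_left]
    intro p hp1 hp2
    simp only [hBH, hBV, bdry, Finset.mem_filter, Finset.mem_univ, true_and] at hp1 hp2
    obtain ⟨⟨hin, hout, _⟩, h2⟩ := hp1
    exact hout (Prod.ext hp2.2 h2 ▸ hin)
  calc (HS T).card + (VS T).card ≤ BH.card + BV.card := Nat.add_le_add hH hV
    _ = (BH ∪ BV).card := (Finset.card_union_of_disjoint hdisj).symm
    _ ≤ (bdry T).card := Finset.card_le_card (Finset.union_subset
        (Finset.filter_subset _ _) (Finset.filter_subset _ _))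

lemma cross_vert {N : ℕ} (S' : Finset (GridV N)) {x y1 y2 : Fin N}
    (h1 : (x, y1) ∈ S') (h2 : (x, y2) ∉ S') :
    ∃ p ∈ bdry S', p.1.1 = x := by
  rcases lt_trichotomy y1 y2 with hlt | heq | hgt
  · set M := (Finset.Ioc y1 y2).filter (fun y : Fin N => (x, y) ∉ S') with hM
    have hMne : M.Nonempty := ⟨y2, Finset.mem_filter.2 ⟨Finset.mem_Ioc.2 ⟨hlt, le_refl _⟩, h2⟩⟩
    set m := M.min' hMne with hm
    have hmM := Finset.mem_filter.1 (M.min'_mem hMne)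
    obtain ⟨hy1m, hmy2⟩ := Finset.mem_Ioc.1 hmM.1
    have hmout := hmM.2
    have hmpos : 0 < (m : ℕ) := lt_of_le_of_lt (Nat.zero_le _) hy1m
    set mp : Fin N := ⟨(m : ℕ) - 1, Nat.lt_of_le_of_lt (Nat.sub_le _ _) m.isLt⟩ with hmp
    have hprev : (x, mp) ∈ S' := by
      rcases eq_or_lt_of_le (Nat.le_sub_one_of_lt (show (y1:ℕ) < (m:ℕ) from hy1m)) with he | hl
      · have : mp = y1 := by apply Fin.ext; simp [hmp]; omega
        rw [this]; exact h1
      · by_contra hc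
        have hmem : mp ∈ M := by
          rw [hM, Finset.mem_filter, Finset.mem_Ioc]
          refine ⟨⟨?_, ?_⟩, hc⟩
          · show (y1 : ℕ) < (mp : ℕ); simp [hmp]; omega
          · show (mp : ℕ) ≤ (y2 : ℕ); simp [hmp]; omega
        have := M.min'_le _ hmem
        rw [← hm] at this
        have : (m : ℕ) ≤ (mp : ℕ) := this
        simp [hmp] at this
        omega
    refine ⟨((x, mp), (x, m)), ?_, rfl⟩
    simp only [bdry, Finset.mem_filter, Finset.mem_univ, true_and]
    refine ⟨hprev, hmout, Or.inl ⟨rfl, Or.inl ?_⟩⟩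
    simp [hmp]; omega
  · exact absurd (heq ▸ h1) h2
  · set M := (Finset.Ico y2 y1).filter (fun y : Fin N => (x, y) ∉ S') with hM
    have hMne : M.Nonempty := ⟨y2, Finset.mem_filter.2 ⟨Finset.mem_Ico.2 ⟨le_refl _, hgt⟩, h2⟩⟩
    set m := M.max' hMne with hm
    have hmM := Finset.mem_filter.1 (M.max'_mem hMne)
    obtain ⟨hy2m, hmy1⟩ := Finset.mem_Ico.1 hmM.1
    have hmout := hmM.2
    have hmlt : (m : ℕ) + 1 ≤ (y1 : ℕ) := hmy1
    set ms : Fin N := ⟨(m : ℕ) + 1, lt_of_le_of_lt hmlt y1.isLt⟩ with hms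
    have hnext : (x, ms) ∈ S' := by
      rcases eq_or_lt_of_le hmlt with he | hl
      · have : ms = y1 := by apply Fin.ext; simp [hms]; omega
        rw [this]; exact h1
      · by_contra hc
        have hmem : ms ∈ M := by
          rw [hM, Finset.mem_filter, Finset.mem_Ico]
          refine ⟨⟨?_, ?_⟩, hc⟩
          · show (y2 : ℕ) ≤ (ms : ℕ); simp [hms]; omega
          · show (ms : ℕ) < (y1 : ℕ); simp [hms]; omega
        have := M.le_max' _ hmem
        rw [← hm] at this
        have : (ms : ℕ) ≤ (m : ℕ) := this
        simp [hms] at this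
    refine ⟨((x, ms), (x, m)), ?_, rfl⟩
    simp only [bdry, Finset.mem_filter, Finset.mem_univ, true_and]
    refine ⟨hnext, hmout, Or.inl ⟨rfl, Or.inr ?_⟩⟩
    simp [hms]

lemma cross_horiz {N : ℕ} (S' : Finset (GridV N)) {y x1 x2 : Fin N}
    (h1 : (x1, y) ∈ S') (h2 : (x2, y) ∉ S') :
    ∃ p ∈ bdry S', p.1.2 = y := by
  rcases lt_trichotomy x1 x2 with hlt | heq | hgt
  · set M := (Finset.Ioc x1 x2).filter (fun x : Fin N => (x, y) ∉ S') with hM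
    have hMne : M.Nonempty := ⟨x2, Finset.mem_filter.2 ⟨Finset.mem_Ioc.2 ⟨hlt, le_refl _⟩, h2⟩⟩
    set m := M.min' hMne with hm
    have hmM := Finset.mem_filter.1 (M.min'_mem hMne)
    obtain ⟨hx1m, hmx2⟩ := Finset.mem_Ioc.1 hmM.1
    have hmout := hmM.2
    have hmpos : 0 < (m : ℕ) := lt_of_le_of_lt (Nat.zero_le _) hx1m
    set mp : Fin N := ⟨(m : ℕ) - 1, Nat.lt_of_le_of_lt (Nat.sub_le _ _) m.isLt⟩ with hmp
    have hprev : (mp, y) ∈ S' := by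
      rcases eq_or_lt_of_le (Nat.le_sub_one_of_lt (show (x1:ℕ) < (m:ℕ) from hx1m)) with he | hl
      · have : mp = x1 := by apply Fin.ext; simp [hmp]; omega
        rw [this]; exact h1
      · by_contra hc
        have hmem : mp ∈ M := by
          rw [hM, Finset.mem_filter, Finset.mem_Ioc]
          refine ⟨⟨?_, ?_⟩, hc⟩
          · show (x1 : ℕ) < (mp : ℕ); simp [hmp]; omega
          · show (mp : ℕ) ≤ (x2 : ℕ); simp [hmp]; omega
        have := M.min'_le _ hmem
        rw [← hm] at this
        have : (m : ℕ) ≤ (mp : ℕ) := this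
        simp [hmp] at this
        omega
    refine ⟨((mp, y), (m, y)), ?_, rfl⟩
    simp only [bdry, Finset.mem_filter, Finset.mem_univ, true_and]
    refine ⟨hprev, hmout, Or.inr ⟨rfl, Or.inl ?_⟩⟩
    simp [hmp]; omega
  · exact absurd (heq ▸ h1) h2
  · set M := (Finset.Ico x2 x1).filter (fun x : Fin N => (x, y) ∉ S') with hM
    have hMne : M.Nonempty := ⟨x2, Finset.mem_filter.2 ⟨Finset.mem_Ico.2 ⟨le_refl _, hgt⟩, h2⟩⟩
    set m := M.max' hMne with hm
    have hmM := Finset.mem_filter.1 (M.max'_mem hMne)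
    obtain ⟨hx2m, hmx1⟩ := Finset.mem_Ico.1 hmM.1
    have hmout := hmM.2
    have hmlt : (m : ℕ) + 1 ≤ (x1 : ℕ) := hmx1
    set ms : Fin N := ⟨(m : ℕ) + 1, lt_of_le_of_lt hmlt x1.isLt⟩ with hms
    have hnext : (ms, y) ∈ S' := by
      rcases eq_or_lt_of_le hmlt with he | hl
      · have : ms = x1 := by apply Fin.ext; simp [hms]; omega
        rw [this]; exact h1
      · by_contra hc
        have hmem : ms ∈ M := by
          rw [hM, Finset.mem_filter, Finset.mem_Ico]
          refine ⟨⟨?_, ?_⟩, hc⟩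
          · show (x2 : ℕ) ≤ (ms : ℕ); simp [hms]; omega
          · show (ms : ℕ) < (x1 : ℕ); simp [hms]; omega
        have := M.le_max' _ hmem
        rw [← hm] at this
        have : (ms : ℕ) ≤ (m : ℕ) := this
        simp [hms] at this
    refine ⟨((ms, y), (m, y)), ?_, rfl⟩
    simp only [bdry, Finset.mem_filter, Finset.mem_univ, true_and]
    refine ⟨hnext, hmout, Or.inr ⟨rfl, Or.inr ?_⟩⟩
    simp [hms]

end SupAux4

section SupMain

lemma key_ineq {N ρ : ℕ} (hN : 1 ≤ N) (d : CapacityData N ρ) (S' : Finset (GridV N)) :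
    ∑ v ∈ S', d.a v ≤ ∑ v ∈ S', d.b v + ρ * (bdry S').card := by
  classical
  by_cases hS : (∀ y : Fin N, ∃ x : Fin N, (x, y) ∉ S') ∧ (∀ x : Fin N, ∃ y : Fin N, (x, y) ∉ S')
  · have h1 := sum_le_starts (ρ := ρ) (f := d.a) d.a_square S'.card S' le_rfl
    have h2 := starts_le_bdry S' hS.1 hS.2
    have h3 : ρ * ((HS S').card + (VS S').card) ≤ ρ * (bdry S').card :=
      Nat.mul_le_mul_left _ h2
    omega
  · by_cases hT : (∀ y : Fin N, ∃ x : Fin N, (x, y) ∈ S') ∧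
        (∀ x : Fin N, ∃ y : Fin N, (x, y) ∈ S')
    · have hrow : ∀ y : Fin N, ∃ x : Fin N, (x, y) ∉ S'ᶜ := by
        intro y; obtain ⟨x, hx⟩ := hT.1 y; exact ⟨x, by simp [hx]⟩
      have hcol : ∀ x : Fin N, ∃ y : Fin N, (x, y) ∉ S'ᶜ := by
        intro x; obtain ⟨y, hy⟩ := hT.2 x; exact ⟨y, by simp [hy]⟩
      have h1 := sum_le_starts (ρ := ρ) (f := d.b) d.b_square (S'ᶜ).card S'ᶜ le_rfl
      have h2 := starts_le_bdry S'ᶜ hrow hcol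
      have h4 := bdry_compl_card S'
      have h3 : ρ * ((HS S'ᶜ).card + (VS S'ᶜ).card) ≤ ρ * (bdry S').card := by
        rw [← h4]; exact Nat.mul_le_mul_left _ h2
      have h5 := Finset.sum_add_sum_compl S' d.a
      have h6 := Finset.sum_add_sum_compl S' d.b
      have h7 := d.total_eq
      omega
    · have hbd : N ≤ (bdry S').card := by
        have himg : ∀ (g : GridV N × GridV N → Fin N),
            (∀ x : Fin N, ∃ p ∈ bdry S', g p = x) → N ≤ (bdry S').card := by
          intro g hsurj
          have hsub : (Finset.univ : Finset (Fin N)) ⊆ (bdry S').image g := by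
            intro x _
            obtain ⟨p, hp, hpx⟩ := hsurj x
            exact Finset.mem_image.2 ⟨p, hp, hpx⟩
          calc N = (Finset.univ : Finset (Fin N)).card := by simp
            _ ≤ ((bdry S').image g).card := Finset.card_le_card hsub
            _ ≤ (bdry S').card := Finset.card_image_le
        rcases not_and_or.mp hS with h | h <;> rcases not_and_or.mp hT with h' | h' <;>
          push_neg at h h'
        · obtain ⟨y1, hy1⟩ := h; obtain ⟨y2, hy2⟩ := h'
          exact himg (fun p => p.1.1) (fun x => cross_vert S' (hy1 x) (hy2 x))
        · obtain ⟨y1, hy1⟩ := h; obtain ⟨x2, hx2⟩ := h'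
          exact absurd (hy1 x2) (hx2 y1)
        · obtain ⟨x1, hx1⟩ := h; obtain ⟨y2, hy2⟩ := h'
          exact absurd (hx1 y2) (hy2 x1)
        · obtain ⟨x1, hx1⟩ := h; obtain ⟨x2, hx2⟩ := h'
          exact himg (fun p => p.1.2) (fun y => cross_horiz S' (hx1 y) (hx2 y))
      have hFN : ∑ v, d.a v ≤ ρ * N := by
        have h := d.a_square N 0 0 hN (by omega) (by omega)
        have huniv : Finset.univ.filter (inSquare (N := N) 0 0 N) = Finset.univ := by
          apply Finset.filter_true_of_mem
          intro v _
          simp only [inSquare]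
          have := v.1.isLt
          have := v.2.isLt
          omega
        rwa [huniv] at h
      have hsub : ∑ v ∈ S', d.a v ≤ ∑ v, d.a v :=
        Finset.sum_le_sum_of_subset (Finset.subset_univ _)
      have hmul : ρ * N ≤ ρ * (bdry S').card := Nat.mul_le_mul_left _ hbd
      omega

end SupMain

/-- For all `N ≥ 1`, `ρ ≥ 1` and all super-tile capacity data with total `F`, every s–p cut
has capacity at least `F`; moreover the cuts determined by `∅` and by the whole grid have
capacity exactly `F`, so the minimum s–p cut value equals `F`. -/
theorem supertile_min_cut {N ρ : ℕ} (hN : 1 ≤ N) (hρ : 1 ≤ ρ) (d : CapacityData N ρ) :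
    (∀ S' : Finset (GridV N), d.F ≤ cutCap d S') ∧
    cutCap d (∅ : Finset (GridV N)) = d.F ∧
    cutCap d (Finset.univ : Finset (GridV N)) = d.F := by
  refine ⟨?_, ?_, ?_⟩
  · intro S'
    have hkey := key_ineq hN d S'
    have hcut : cutCap d S' = (∑ v ∈ S'ᶜ, d.a v) + (∑ v ∈ S', d.b v) + ρ * (bdry S').card :=
      rfl
    have hsplit := Finset.sum_add_sum_compl S' d.a
    unfold CapacityData.F
    omega
  · simp [cutCap, CapacityData.F]
  · have := d.total_eq
    simp [cutCap, CapacityData.F, this]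
end

section
/- Let N ≥ 1, ρ ≥ 1 and let a, b : V → ℕ be super-tile capacity data on the N×N grid V. Let S' ⊆ V. If C is a connected component of S' (with respect to grid adjacency restricted to S') whose bounding rectangle is not all of V, then cap(S' \ C) ≤ cap(S'). Likewise, if C is a connected component of V \ S' whose bounding rectangle is not all of V, then cap(S' ∪ C) ≤ cap(S'). -/
/-- `C` is a connected component of `X` (with respect to grid adjacency restricted to `X`):
`C` is the set of vertices reachable from some `v ∈ X` by paths staying inside `X`. -/
def IsComponent {N : ℕ} (X C : Finset (GridV N)) : Prop :=
  ∃ v ∈ X, ∀ w : GridV N,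
    w ∈ C ↔ Relation.ReflTransGen (fun p q => p ∈ X ∧ q ∈ X ∧ Adj p q) v w

/-- The bounding rectangle of `C` is all of the grid: `C` touches all four sides. -/
def FullBoundingRect {N : ℕ} (C : Finset (GridV N)) : Prop :=
  (∃ v ∈ C, (v.1 : ℕ) = 0) ∧ (∃ v ∈ C, (v.1 : ℕ) = N - 1) ∧
  (∃ v ∈ C, (v.2 : ℕ) = 0) ∧ (∃ v ∈ C, (v.2 : ℕ) = N - 1)


/-!
Moving a component `C` of `S'` out of `S'` trades the sink arcs `b` on `C` for the source arcs `a`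
on `C` and deletes the `ρ`-arcs leaving `C`; since `C` is a component it creates no new boundary
edge. So it suffices that `Σ_{v ∈ C} a v ≤ ρ · #∂C`, `∂C` the edges leaving `C`. Let `P`, `Q` be
the sets of columns and rows met by `C`. By connectivity they are intervals, so `C` lies in a
square of side `max #P #Q`, whose `a`-mass is at most `ρ · max #P #Q`. If `C` misses some row,
each of its columns contains a vertical boundary edge, so `#P ≤ #∂C`; symmetrically for columns. A
component whose bounding rectangle is not full misses a row or a column, and if it misses a column
then either `#P ≤ #Q`, or `#Q < #P ≤ N` and it misses a row as well. Moving a component of the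
complement is the same move for the complementary cut with `a` and `b` exchanged.
-/

open Finset Relation

theorem SimpleGraph.Preconnected.exists_adj_mem_not_mem {V : Type*} {G : SimpleGraph V}
    (hG : G.Preconnected) {s : Set V} {u v : V} (hu : u ∈ s) (hv : v ∉ s) :
    ∃ x ∈ s, ∃ y ∉ s, G.Adj x y := by
  obtain ⟨p⟩ := hG u v
  obtain ⟨d, -, hd₁, hd₂⟩ := p.exists_boundary_dart s hu hv
  exact ⟨d.fst, hd₁, d.snd, hd₂, d.adj⟩

/-- Discrete intermediate value theorem. -/
theorem Relation.ReflTransGen.exists_mem_eq {α : Type*} {r : α → α → Prop} {s : Set α}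
    {g : α → ℕ} (hs : ∀ p q, r p q → q ∈ s) (hg : ∀ p q, r p q → g q ≤ g p + 1)
    {u w : α} (hu : u ∈ s) (h : ReflTransGen r u w) {x : ℕ} (hux : g u ≤ x) (hxw : x ≤ g w) :
    ∃ z ∈ s, g z = x := by
  induction h with
  | refl => exact ⟨u, hu, by omega⟩
  | @tail b c _ hbc ih =>
    by_cases hxb : x ≤ g b
    · exact ih hxb
    · exact ⟨c, hs b c hbc, by have := hg b c hbc; omega⟩

theorem Finset.card_le_of_ne_univ_or {α : Type*} [Fintype α] {s t : Finset α} {B : ℕ}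
    (hs : t ≠ univ → #s ≤ B) (ht : s ≠ univ → #t ≤ B) (hst : s ≠ univ ∨ t ≠ univ) :
    #s ≤ B := by
  by_cases h : t = univ
  · subst h
    calc #s ≤ #(univ : Finset α) := card_le_univ s |>.trans_eq card_univ.symm
      _ ≤ B := ht (hst.resolve_right (not_not.2 rfl))
  · exact hs h

variable {N ρ : ℕ}

theorem Adj.symm {u w : GridV N} (h : Adj u w) : Adj w u := by
  unfold Adj at *; tauto

theorem Adj.fst_le {u w : GridV N} (h : Adj u w) : (w.1 : ℕ) ≤ u.1 + 1 := by
  unfold Adj at h; omega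

theorem Adj.snd_le {u w : GridV N} (h : Adj u w) : (w.2 : ℕ) ≤ u.2 + 1 := by
  unfold Adj at h; omega

def edgeBoundary (S : Finset (GridV N)) : Finset (GridV N × GridV N) :=
  univ.filter fun p => p.1 ∈ S ∧ p.2 ∉ S ∧ Adj p.1 p.2

theorem cutCap_eq (d : CapacityData N ρ) (S : Finset (GridV N)) :
    cutCap d S = ∑ v ∈ Sᶜ, d.a v + ∑ v ∈ S, d.b v + ρ * #(edgeBoundary S) := rfl

theorem card_edgeBoundary_compl (S : Finset (GridV N)) :
    #(edgeBoundary Sᶜ) = #(edgeBoundary S) :=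
  card_equiv (Equiv.prodComm _ _) fun p => by
    simp only [edgeBoundary, mem_filter, mem_univ, true_and, mem_compl, Equiv.prodComm_apply,
      Prod.fst_swap, Prod.snd_swap, not_not]
    exact ⟨fun ⟨h₁, h₂, h₃⟩ => ⟨h₂, h₁, h₃.symm⟩, fun ⟨h₁, h₂, h₃⟩ => ⟨h₂, h₁, h₃.symm⟩⟩

theorem image_fst_subset_image_edgeBoundary {C : Finset (GridV N)}
    (hrow : C.image Prod.snd ≠ univ) :
    C.image Prod.fst ⊆ (edgeBoundary C).image fun p => p.1.1 := by
  obtain ⟨y, -, hy⟩ := exists_of_ssubset (ssubset_univ_iff.2 hrow)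
  intro x hx
  obtain ⟨v, hv, rfl⟩ := mem_image.1 hx
  obtain ⟨r, hr, r', hr', hadj⟩ :=
    (SimpleGraph.pathGraph_preconnected N).exists_adj_mem_not_mem (s := {r | (v.1, r) ∈ C})
      (u := v.2) hv fun h => hy (mem_image.2 ⟨_, h, rfl⟩)
  refine mem_image.2 ⟨((v.1, r), (v.1, r')), ?_, rfl⟩
  exact mem_filter.2 ⟨mem_univ _, hr, hr', Or.inl ⟨rfl, SimpleGraph.pathGraph_adj.1 hadj⟩⟩

theorem image_snd_subset_image_edgeBoundary {C : Finset (GridV N)}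
    (hcol : C.image Prod.fst ≠ univ) :
    C.image Prod.snd ⊆ (edgeBoundary C).image fun p => p.1.2 := by
  obtain ⟨x, -, hx⟩ := exists_of_ssubset (ssubset_univ_iff.2 hcol)
  intro y hy
  obtain ⟨v, hv, rfl⟩ := mem_image.1 hy
  obtain ⟨r, hr, r', hr', hadj⟩ :=
    (SimpleGraph.pathGraph_preconnected N).exists_adj_mem_not_mem (s := {r | (r, v.2) ∈ C})
      (u := v.1) hv fun h => hx (mem_image.2 ⟨_, h, rfl⟩)
  refine mem_image.2 ⟨((r, v.2), (r', v.2)), ?_, rfl⟩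
  exact mem_filter.2 ⟨mem_univ _, hr, hr', Or.inr ⟨rfl, SimpleGraph.pathGraph_adj.1 hadj⟩⟩

def AdjWithin (C : Finset (GridV N)) (p q : GridV N) : Prop :=
  p ∈ C ∧ q ∈ C ∧ Adj p q

instance (C : Finset (GridV N)) : Std.Symm (AdjWithin C) :=
  ⟨fun _ _ ⟨hp, hq, hpq⟩ => ⟨hq, hp, hpq.symm⟩⟩

namespace IsComponent

variable {X C : Finset (GridV N)}

theorem subset (h : IsComponent X C) : C ⊆ X := by
  obtain ⟨v, hv, hC⟩ := h
  intro w hw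
  rcases ((hC w).1 hw).cases_tail with rfl | ⟨_, -, -, hw', -⟩
  exacts [hv, hw']

theorem mem_of_adj (h : IsComponent X C) {u w : GridV N} (hu : u ∈ C) (hw : w ∈ X)
    (huw : Adj u w) : w ∈ C := by
  obtain ⟨v, -, hC⟩ := id h
  exact (hC w).2 (((hC u).1 hu).tail ⟨h.subset hu, hw, huw⟩)

theorem reflTransGen_adjWithin (h : IsComponent X C) {u w : GridV N} (hu : u ∈ C)
    (hw : w ∈ C) : ReflTransGen (AdjWithin C) u w := by
  obtain ⟨v, -, hC⟩ := h
  have from_base : ∀ w ∈ C, ReflTransGen (AdjWithin C) v w := by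
    intro w hw
    induction (hC w).1 hw with
    | refl => exact .refl
    | @tail p q hvp hpq ih =>
      exact ih ((hC p).2 hvp) |>.tail ⟨(hC p).2 hvp, (hC q).2 (hvp.tail hpq), hpq.2.2⟩
  exact (Std.Symm.symm _ _ (from_base u hu)).trans (from_base w hw)

end IsComponent

theorem Icc_subset_image_of_reflTransGen {C : Finset (GridV N)} {π : GridV N → Fin N}
    (hπ : ∀ {u w}, Adj u w → (π w : ℕ) ≤ π u + 1) {u w : GridV N} (hu : u ∈ C)
    (huw : ReflTransGen (AdjWithin C) u w) : Icc (π u) (π w) ⊆ C.image π := by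
  intro x hx
  obtain ⟨z, hz, hzx⟩ := huw.exists_mem_eq (s := ↑C) (g := fun v => (π v : ℕ))
    (fun _ _ h => h.2.1) (fun _ _ h => hπ h.2.2) hu (mem_Icc.1 hx).1 (mem_Icc.1 hx).2
  exact mem_image.2 ⟨z, hz, Fin.ext hzx⟩

theorem lt_add_card_image_of_reflTransGen {C : Finset (GridV N)} {π : GridV N → Fin N}
    (hπ : ∀ {u w}, Adj u w → (π w : ℕ) ≤ π u + 1) {u w : GridV N} (hu : u ∈ C)
    (huw : ReflTransGen (AdjWithin C) u w) : (π w : ℕ) < π u + #(C.image π) := by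
  have hIcc := card_le_card (Icc_subset_image_of_reflTransGen hπ hu huw)
  have hpos : 0 < #(C.image π) := card_pos.2 ⟨_, mem_image_of_mem π hu⟩
  rw [Fin.card_Icc] at hIcc
  omega

def SquareBounded (ρ : ℕ) (f : GridV N → ℕ) : Prop :=
  ∀ c x0 y0 : ℕ, 1 ≤ c → x0 + c ≤ N → y0 + c ≤ N →
    ∑ v ∈ univ.filter (inSquare x0 y0 c), f v ≤ ρ * c

theorem SquareBounded.sum_le {f : GridV N → ℕ} (hf : SquareBounded ρ f) {C : Finset (GridV N)}
    {c : ℕ} (hcN : c ≤ N) (hx : ∀ u ∈ C, ∀ w ∈ C, (w.1 : ℕ) < u.1 + c)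
    (hy : ∀ u ∈ C, ∀ w ∈ C, (w.2 : ℕ) < u.2 + c) : ∑ v ∈ C, f v ≤ ρ * c := by
  rcases C.eq_empty_or_nonempty with rfl | hne
  · simp
  obtain ⟨u, hu, hu_min⟩ := C.exists_min_image (fun v => (v.1 : ℕ)) hne
  obtain ⟨u', hu', hu'_min⟩ := C.exists_min_image (fun v => (v.2 : ℕ)) hne
  have hc : 1 ≤ c := by have := hx u hu u hu; omega
  refine (sum_le_sum_of_subset fun v hv => ?_).trans
    (hf c (min u.1 (N - c)) (min u'.2 (N - c)) hc (by omega) (by omega))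
  have := hx u hu v hv; have := hy u' hu' v hv; have := hu_min v hv; have := hu'_min v hv
  have := v.1.isLt; have := v.2.isLt
  exact mem_filter.2 ⟨mem_univ _, by omega, by omega, by omega, by omega⟩

theorem fullBoundingRect_of_image_eq_univ (hN : 0 < N) {C : Finset (GridV N)}
    (hcol : C.image Prod.fst = univ) (hrow : C.image Prod.snd = univ) : FullBoundingRect C := by
  have hit : ∀ π : GridV N → Fin N, C.image π = univ → ∀ x < N, ∃ v ∈ C, (π v : ℕ) = x :=
    fun π h x hx => by
      obtain ⟨v, hv, hvx⟩ := mem_image.1 (h ▸ mem_univ (⟨x, hx⟩ : Fin N))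
      exact ⟨v, hv, by rw [hvx]⟩
  exact ⟨hit _ hcol 0 hN, hit _ hcol _ (by omega), hit _ hrow 0 hN, hit _ hrow _ (by omega)⟩

theorem sum_le_mul_card_edgeBoundary {f : GridV N → ℕ} (hf : SquareBounded ρ f)
    {C : Finset (GridV N)} (hconn : ∀ u ∈ C, ∀ w ∈ C, ReflTransGen (AdjWithin C) u w)
    (hnf : ¬ FullBoundingRect C) : ∑ v ∈ C, f v ≤ ρ * #(edgeBoundary C) := by
  rcases C.eq_empty_or_nonempty with rfl | ⟨v₀, hv₀⟩
  · simp
  set P := C.image Prod.fst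
  set Q := C.image Prod.snd
  have hPQ : P ≠ univ ∨ Q ≠ univ := by
    by_contra! h
    exact hnf (fullBoundingRect_of_image_eq_univ v₀.1.pos h.1 h.2)
  have hP : Q ≠ univ → #P ≤ #(edgeBoundary C) := fun h =>
    (card_le_card (image_fst_subset_image_edgeBoundary h)).trans card_image_le
  have hQ : P ≠ univ → #Q ≤ #(edgeBoundary C) := fun h =>
    (card_le_card (image_snd_subset_image_edgeBoundary h)).trans card_image_le
  have hPN : #P ≤ N := (card_le_univ P).trans_eq (Fintype.card_fin N)
  have hQN : #Q ≤ N := (card_le_univ Q).trans_eq (Fintype.card_fin N)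
  calc ∑ v ∈ C, f v ≤ ρ * max #P #Q :=
        hf.sum_le (max_le hPN hQN)
          (fun u hu w hw => (lt_add_card_image_of_reflTransGen Adj.fst_le hu
            (hconn u hu w hw)).trans_le (Nat.add_le_add_left (le_max_left _ _) _))
          (fun u hu w hw => (lt_add_card_image_of_reflTransGen Adj.snd_le hu
            (hconn u hu w hw)).trans_le (Nat.add_le_add_left (le_max_right _ _) _))
    _ ≤ ρ * #(edgeBoundary C) := Nat.mul_le_mul_left ρ <|
        max_le (card_le_of_ne_univ_or hP hQ hPQ) (card_le_of_ne_univ_or hQ hP hPQ.symm)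

theorem IsComponent.card_edgeBoundary_add {X C : Finset (GridV N)} (h : IsComponent X C) :
    #(edgeBoundary C) + #(edgeBoundary (X \ C)) = #(edgeBoundary X) := by
  rw [← card_filter_add_card_filter_not (s := edgeBoundary X) (fun p => p.1 ∈ C)]
  congr 2 <;> ext ⟨u, w⟩ <;> simp only [edgeBoundary, mem_filter, mem_univ, true_and, mem_sdiff]
  · exact ⟨fun ⟨hu, hw, huw⟩ => ⟨⟨h.subset hu, fun hwX => hw (h.mem_of_adj hu hwX huw), huw⟩, hu⟩,
      fun ⟨⟨_, hw, huw⟩, hu⟩ => ⟨hu, fun hwC => hw (h.subset hwC), huw⟩⟩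
  · refine ⟨fun ⟨⟨huX, huC⟩, hw, huw⟩ => ⟨⟨huX, fun hwX => ?_, huw⟩, huC⟩,
      fun ⟨⟨huX, hwX, huw⟩, huC⟩ => ⟨⟨huX, huC⟩, fun hw => hwX hw.1, huw⟩⟩
    exact hw ⟨hwX, fun hwC => huC (h.mem_of_adj hwC huX huw.symm)⟩

theorem cutCap_sdiff_le (d : CapacityData N ρ) {S C : Finset (GridV N)} (hC : IsComponent S C)
    (hnf : ¬ FullBoundingRect C) : cutCap d (S \ C) ≤ cutCap d S := by
  have ha : ∑ v ∈ (S \ C)ᶜ, d.a v = ∑ v ∈ C, d.a v + ∑ v ∈ Sᶜ, d.a v := by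
    rw [compl_sdiff, himp_eq, sup_eq_union, sum_union (disjoint_compl_right_iff.2 hC.subset)]
  have hb : ∑ v ∈ S \ C, d.b v + ∑ v ∈ C, d.b v = ∑ v ∈ S, d.b v := sum_sdiff hC.subset
  have hmass : ∑ v ∈ C, d.a v ≤ ρ * #(edgeBoundary C) :=
    sum_le_mul_card_edgeBoundary d.a_square (fun _ hu _ hw => hC.reflTransGen_adjWithin hu hw) hnf
  rw [cutCap_eq, cutCap_eq, ha, ← hb, ← hC.card_edgeBoundary_add, mul_add]
  omega

def CapacityData.swap (d : CapacityData N ρ) : CapacityData N ρ :=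
  ⟨d.b, d.a, d.total_eq.symm, d.b_square, d.a_square⟩

theorem cutCap_swap_compl (d : CapacityData N ρ) (S : Finset (GridV N)) :
    cutCap d.swap Sᶜ = cutCap d S := by
  rw [cutCap_eq, cutCap_eq, card_edgeBoundary_compl, compl_compl, add_comm (∑ v ∈ Sᶜ, _)]
  rfl

theorem cut_decreases_on_component_move_general {N ρ : ℕ}
    (d : CapacityData N ρ) (S' : Finset (GridV N)) :
    (∀ C : Finset (GridV N), IsComponent S' C → ¬ FullBoundingRect C →
      cutCap d (S' \ C) ≤ cutCap d S') ∧
    (∀ C : Finset (GridV N), IsComponent S'ᶜ C → ¬ FullBoundingRect C →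
      cutCap d (S' ∪ C) ≤ cutCap d S') := by
  refine ⟨fun C hC hnf => cutCap_sdiff_le d hC hnf, fun C hC hnf => ?_⟩
  rw [← cutCap_swap_compl d, ← cutCap_swap_compl d S', compl_union, ← sdiff_eq_inter_compl]
  exact cutCap_sdiff_le d.swap hC hnf

/-- Moving a connected component whose bounding rectangle is not the whole grid across the
cut does not increase the cut capacity: if `C` is a component of `S'` (resp. of the
complement of `S'`) with non-full bounding rectangle, then `cap (S' \ C) ≤ cap S'`
(resp. `cap (S' ∪ C) ≤ cap S'`). -/
theorem cut_decreases_on_component_move {N ρ : ℕ} (hN : 1 ≤ N) (hρ : 1 ≤ ρ)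
    (d : CapacityData N ρ) (S' : Finset (GridV N)) :
    (∀ C : Finset (GridV N), IsComponent S' C → ¬ FullBoundingRect C →
      cutCap d (S' \ C) ≤ cutCap d S') ∧
    (∀ C : Finset (GridV N), IsComponent S'ᶜ C → ¬ FullBoundingRect C →
      cutCap d (S' ∪ C) ≤ cutCap d S') :=
  cut_decreases_on_component_move_general d S'
end
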